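/- arXiv:math/9907142 — 4 statements merged into one kernel-verified Lean document; each statement's English description precedes it below -/
import Mathlib

section
/- Let E_T̄ denote the subspace of H consisting of those η for which each η(k) has finite moments of all orders; E_T̄ is dense in H. Then the symmetric quadratic forms 𝔞₀ = 𝔞 restricted to E_T̄ and 𝔟₀ = 𝔟 restricted to E_T̄ are densely defined closable quadratic forms in H. Concretely, the linear map η ↦ U(∞, η) from E_T̄ into L²(Ω, ℝ) is closable as an operator from H to L²(Ω, ℝ): if (s_n)_{n≥1} is a sequence in E_T̄ with ‖s_n‖_H → 0 and ‖U(∞, s_n) − v‖_{L²} → 0 for some v ∈ L²(Ω, ℝ), then v = 0. -/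
open MeasureTheory ProbabilityTheory Filter Finset

noncomputable section

namespace Reins

variable {Ω : Type*}

/-- Euclidean dot product on `ℝ^N`. -/
def dot {N : ℕ} (x y : Fin N → ℝ) : ℝ := ∑ i, x i * y i

variable [m0 : MeasurableSpace Ω]

/-- Membership in the Hilbert space `H`: each component `η k`, `k ≤ T̄`, is
`F k`-measurable and square integrable. -/
def InH (F : Filtration ℕ m0) (P : Measure Ω) (N Tb : ℕ)
    (η : ℕ → Ω → Fin N → ℝ) : Prop :=
  ∀ k, k ≤ Tb → StronglyMeasurable[F k] (η k) ∧ MemLp (η k) 2 P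

/-- Membership in the subspace `E_T̄` of `H`: finite moments of all orders. -/
def InE (F : Filtration ℕ m0) (P : Measure Ω) (N Tb : ℕ)
    (η : ℕ → Ω → Fin N → ℝ) : Prop :=
  ∀ k, k ≤ Tb → StronglyMeasurable[F k] (η k) ∧ ∀ p : ℕ, MemLp (η k) p P

/-- The final utility `U(∞, η) = Σ_{0 ≤ k ≤ T̄} η(k)·u^∞(k)`. -/
def Ufin {N : ℕ} (Tb : ℕ) (uInf η : ℕ → Ω → Fin N → ℝ) (ω : Ω) : ℝ :=
  ∑ k ∈ range (Tb + 1), dot (η k ω) (uInf k ω)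

/-- Squared norm in `H`. -/
def normHsq (P : Measure Ω) {N : ℕ} (Tb : ℕ) (η : ℕ → Ω → Fin N → ℝ) : ℝ :=
  ∑ k ∈ range (Tb + 1), ∫ ω, dot (η k ω) (η k ω) ∂P

/-- The quadratic form `𝔞(η) = E(U(∞,η)²)`. -/
def qa (P : Measure Ω) {N : ℕ} (Tb : ℕ) (uInf η : ℕ → Ω → Fin N → ℝ) : ℝ :=
  ∫ ω, (Ufin Tb uInf η ω) ^ 2 ∂P

/-- The quadratic form `𝔟(η) = E((U(∞,η) − E U(∞,η))²)`. -/
def qb (P : Measure Ω) {N : ℕ} (Tb : ℕ) (uInf η : ℕ → Ω → Fin N → ℝ) : ℝ :=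
  ∫ ω, (Ufin Tb uInf η ω - ∫ ω', Ufin Tb uInf η ω' ∂P) ^ 2 ∂P

/-- Mean (expectation) vector of an `ℝ^N`-valued random vector. -/
def mean (P : Measure Ω) {N : ℕ} (u : Ω → Fin N → ℝ) : Fin N → ℝ :=
  fun i => ∫ ω, u ω i ∂P

/-- Covariance matrix of an `ℝ^N`-valued random vector. -/
def covMatrix (P : Measure Ω) {N : ℕ} (u : Ω → Fin N → ℝ) : Matrix (Fin N) (Fin N) ℝ :=
  Matrix.of fun i j => ∫ ω, (u ω i - mean P u i) * (u ω j - mean P u j) ∂P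

/-- Second-moment matrix `M^𝔞` of an `ℝ^N`-valued random vector. -/
def momMatrix (P : Measure Ω) {N : ℕ} (u : Ω → Fin N → ℝ) : Matrix (Fin N) (Fin N) ℝ :=
  Matrix.of fun i j => ∫ ω, u ω i * u ω j ∂P

/-- Finite moments of all orders. -/
def FinMoments (P : Measure Ω) {N : ℕ} (u : Ω → Fin N → ℝ) : Prop :=
  ∀ p : ℕ, MemLp u p P

/-- Hypothesis (H1): `u^∞(k)` is independent of `F k`. -/
def H1 (F : Filtration ℕ m0) (P : Measure Ω) {N : ℕ} (Tb : ℕ)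
    (uInf : ℕ → Ω → Fin N → ℝ) : Prop :=
  ∀ k, k ≤ Tb → Indep (MeasurableSpace.comap (uInf k) inferInstance) (F k) P

/-- Hypothesis (H2): the covariance matrix of `u^∞(k)` is positive definite. -/
def H2 (P : Measure Ω) {N : ℕ} (Tb : ℕ) (uInf : ℕ → Ω → Fin N → ℝ) : Prop :=
  ∀ k, k ≤ Tb → (covMatrix P (uInf k)).PosDef

/-- Hypothesis (H3): `u^∞(k)` and `u^∞(l)` are independent for `k ≠ l`. -/
def H3 (P : Measure Ω) {N : ℕ} (Tb : ℕ) (uInf : ℕ → Ω → Fin N → ℝ) : Prop :=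
  ∀ k l, k ≤ Tb → l ≤ Tb → k ≠ l → IndepFun (uInf k) (uInf l) P

end Reins

section Aux

variable {α : Type*} [MeasurableSpace α] {P : Measure α}

private lemma aux_hpqr1 : (1 : ENNReal) / 1 = 1 / 2 + 1 / 2 := by
  simp only [one_div, inv_one]
  rw [ENNReal.inv_two_add_inv_two]

private lemma aux_hpqr2 : (1 : ENNReal) / 2 = 1 / 4 + 1 / 4 := by
  simp only [one_div]
  rw [show (4:ENNReal) = 2*2 by norm_num, ENNReal.mul_inv (by norm_num) (by norm_num),
    ← two_mul, ← mul_assoc, ENNReal.mul_inv_cancel (by norm_num) (by norm_num), one_mul]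

private lemma aux_mulL1 {f g : α → ℝ} (hf : MemLp f 2 P) (hg : MemLp g 2 P) :
    Integrable (fun w => f w * g w) P := by
  have h : MemLp (g • f) 1 P := hf.smul hg (hpqr := ⟨by simp only [← one_div]; exact aux_hpqr1.symm⟩)
  refine memLp_one_iff_integrable.mp (h.ae_eq ?_)
  filter_upwards with w
  simp [mul_comm]

private lemma aux_mulL2 {f g : α → ℝ} (hf : MemLp f 4 P) (hg : MemLp g 4 P) :
    MemLp (fun w => f w * g w) 2 P := by
  have h : MemLp (g • f) 2 P := hf.smul hg (hpqr := ⟨by simp only [← one_div]; exact aux_hpqr2.symm⟩)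
  refine h.ae_eq ?_
  filter_upwards with w
  simp [mul_comm]

private lemma aux_compMem {N : ℕ} {f : α → Fin N → ℝ} {p : ENNReal} (hf : MemLp f p P)
    (i : Fin N) : MemLp (fun w => f w i) p P :=
  (ContinuousLinearMap.proj (R := ℝ) (φ := fun _ : Fin N => ℝ) i).comp_memLp' hf

end Aux

open Reins in
/-- closability, Lemma A.2, concrete form.  If `(s n)` is a sequence in
`E_T̄` whose `H`-norms tend to `0` and such that `U(∞, s n) → v` in `L²(Ω, ℝ)`, then `v = 0`
(almost everywhere); i.e. the map `η ↦ U(∞, η)` is closable from `H` to `L²`, hence the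
densely defined symmetric quadratic forms `𝔞₀` and `𝔟₀` are closable. -/
theorem statement0
    {Ω : Type*} [m0 : MeasurableSpace Ω] (P : Measure Ω) [IsProbabilityMeasure P]
    (F : Filtration ℕ m0) (N Tb : ℕ) (hN : 1 ≤ N) (hTb : 1 ≤ Tb)
    (hF0 : (F 0 : MeasurableSpace Ω) = ⊥)
    (uInf : ℕ → Ω → Fin N → ℝ) (huInf : ∀ k, k ≤ Tb → FinMoments P (uInf k))
    (s : ℕ → ℕ → Ω → Fin N → ℝ) (hs : ∀ n, InE F P N Tb (s n))
    (v : Ω → ℝ) (hv : MemLp v 2 P)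
    (hnorm : Tendsto (fun n => normHsq P Tb (s n)) atTop (nhds 0))
    (hL2 : Tendsto (fun n => ∫ ω, (Ufin Tb uInf (s n) ω - v ω) ^ 2 ∂P) atTop (nhds 0)) :
    v =ᵐ[P] 0 := by
  classical
  -- component-wise moment bounds
  have hs2 : ∀ n k, k ∈ range (Tb + 1) → ∀ i, MemLp (fun ω => s n k ω i) 2 P := by
    intro n k hk i
    have h := ((hs n) k (Nat.lt_succ_iff.mp (mem_range.mp hk))).2 2
    exact aux_compMem (by simpa using h) i
  have hs4 : ∀ n k, k ∈ range (Tb + 1) → ∀ i, MemLp (fun ω => s n k ω i) 4 P := by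
    intro n k hk i
    have h := ((hs n) k (Nat.lt_succ_iff.mp (mem_range.mp hk))).2 4
    exact aux_compMem (by simpa using h) i
  have hu4 : ∀ k, k ∈ range (Tb + 1) → ∀ i, MemLp (fun ω => uInf k ω i) 4 P := by
    intro k hk i
    have h := huInf k (Nat.lt_succ_iff.mp (mem_range.mp hk)) 4
    exact aux_compMem (by simpa using h) i
  -- the auxiliary functions
  set W : ℕ → Ω → ℝ := fun n ω => ∑ k ∈ range (Tb + 1), dot (s n k ω) (s n k ω) with hWdef
  set D : ℕ → Ω → ℝ := fun n ω => (Ufin Tb uInf (s n) ω - v ω) ^ 2 with hDdef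
  set G : ℕ → Ω → ℝ := fun n ω => W n ω + D n ω with hGdef
  -- nonnegativity
  have hWnn : ∀ n ω, 0 ≤ W n ω := by
    intro n ω
    refine Finset.sum_nonneg fun k _ => ?_
    exact Finset.sum_nonneg fun i _ => mul_self_nonneg _
  have hDnn : ∀ n ω, 0 ≤ D n ω := fun n ω => sq_nonneg _
  have hGnn : ∀ n ω, 0 ≤ G n ω := fun n ω => add_nonneg (hWnn n ω) (hDnn n ω)
  -- integrability
  have hWint : ∀ n, Integrable (W n) P := by
    intro n
    refine integrable_finset_sum _ fun k hk => ?_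
    simp only [dot]
    exact integrable_finset_sum _ fun i _ => aux_mulL1 (hs2 n k hk i) (hs2 n k hk i)
  have hU2 : ∀ n, MemLp (Ufin Tb uInf (s n)) 2 P := by
    intro n
    have : MemLp (fun ω => ∑ k ∈ range (Tb + 1), dot (s n k ω) (uInf k ω)) 2 P := by
      refine memLp_finset_sum _ fun k hk => ?_
      simp only [dot]
      exact memLp_finset_sum _ fun i _ => aux_mulL2 (hs4 n k hk i) (hu4 k hk i)
    exact this
  have hDint : ∀ n, Integrable (D n) P := by
    intro n
    have h := ((hU2 n).sub hv).integrable_sq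
    refine h.congr ?_
    filter_upwards with ω
    simp [hDdef]
  have hGint : ∀ n, Integrable (G n) P := fun n => (hWint n).add (hDint n)
  -- convergence of the integrals of G to 0
  have hWto : Tendsto (fun n => ∫ ω, W n ω ∂P) atTop (nhds 0) := by
    have : ∀ n, ∫ ω, W n ω ∂P = normHsq P Tb (s n) := by
      intro n
      rw [hWdef, normHsq]
      exact integral_finset_sum _ fun k hk => by
        simp only [dot]
        exact integrable_finset_sum _ fun i _ => aux_mulL1 (hs2 n k hk i) (hs2 n k hk i)
    simpa only [this] using hnorm
  have hGto : Tendsto (fun n => ∫ ω, G n ω ∂P) atTop (nhds 0) := by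
    have h := hWto.add hL2
    simp only [add_zero] at h
    refine h.congr fun n => ?_
    rw [← integral_add (hWint n) (hDint n)]
  -- convergence in measure of G to 0
  have hmeas : ∀ n, AEStronglyMeasurable (G n) P := fun n => (hGint n).aestronglyMeasurable
  have heLp : Tendsto (fun n => eLpNorm (G n - 0) 1 P) atTop (nhds 0) := by
    have h1 : ∀ n, eLpNorm (G n) 1 P = ENNReal.ofReal (∫ ω, G n ω ∂P) := by
      intro n
      rw [eLpNorm_one_eq_lintegral_enorm,
        ofReal_integral_eq_lintegral_ofReal (hGint n) (Filter.Eventually.of_forall (hGnn n))]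
      refine lintegral_congr fun ω => ?_
      rw [Real.enorm_eq_ofReal (hGnn n ω)]
    have h2 : Tendsto (fun n => ENNReal.ofReal (∫ ω, G n ω ∂P)) atTop
        (nhds (ENNReal.ofReal 0)) := (ENNReal.continuous_ofReal.tendsto 0).comp hGto
    simpa only [sub_zero, h1, ENNReal.ofReal_zero] using h2
  have hTIM : TendstoInMeasure P G atTop 0 :=
    tendstoInMeasure_of_tendsto_eLpNorm one_ne_zero hmeas aestronglyMeasurable_zero heLp
  obtain ⟨ns, _, hae⟩ := hTIM.exists_seq_tendsto_ae
  -- a.e. pointwise argument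
  filter_upwards [hae] with ω hω
  simp only [Pi.zero_apply] at hω ⊢
  have hW0 : Tendsto (fun j => W (ns j) ω) atTop (nhds 0) :=
    squeeze_zero (fun j => hWnn _ ω) (fun j => le_add_of_nonneg_right (hDnn _ ω)) hω
  have hD0 : Tendsto (fun j => D (ns j) ω) atTop (nhds 0) :=
    squeeze_zero (fun j => hDnn _ ω) (fun j => le_add_of_nonneg_left (hWnn _ ω)) hω
  -- from D → 0 : Ufin (s (ns j)) ω → v ω
  have hUv : Tendsto (fun j => Ufin Tb uInf (s (ns j)) ω) atTop (nhds (v ω)) := by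
    have habs : Tendsto (fun j => |Ufin Tb uInf (s (ns j)) ω - v ω|) atTop (nhds 0) := by
      have h := (Real.continuous_sqrt.tendsto 0).comp hD0
      simpa [Function.comp_def, hDdef, Real.sqrt_sq_eq_abs] using h
    have hdiff : Tendsto (fun j => Ufin Tb uInf (s (ns j)) ω - v ω) atTop (nhds 0) :=
      (tendsto_zero_iff_abs_tendsto_zero _).mpr habs
    have h := hdiff.add_const (v ω)
    simpa using h
  -- from W → 0 : Ufin (s (ns j)) ω → 0
  have hU0 : Tendsto (fun j => Ufin Tb uInf (s (ns j)) ω) atTop (nhds 0) := by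
    have hcomp : ∀ k ∈ range (Tb + 1), ∀ i : Fin N,
        Tendsto (fun j => s (ns j) k ω i) atTop (nhds 0) := by
      intro k hk i
      have hle : ∀ j, (s (ns j) k ω i) * (s (ns j) k ω i) ≤ W (ns j) ω := by
        intro j
        have h1 : (s (ns j) k ω i) * (s (ns j) k ω i) ≤ dot (s (ns j) k ω) (s (ns j) k ω) :=
          Finset.single_le_sum (f := fun i' => s (ns j) k ω i' * s (ns j) k ω i')
            (fun i' _ => mul_self_nonneg _) (mem_univ i)
        refine h1.trans ?_
        exact Finset.single_le_sum
          (f := fun k' => dot (s (ns j) k' ω) (s (ns j) k' ω))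
          (fun k' _ => Finset.sum_nonneg fun i' _ => mul_self_nonneg _) hk
      have hsq : Tendsto (fun j => (s (ns j) k ω i) * (s (ns j) k ω i)) atTop (nhds 0) :=
        squeeze_zero (fun j => mul_self_nonneg _) hle hW0
      have habs : Tendsto (fun j => |s (ns j) k ω i|) atTop (nhds 0) := by
        have h := (Real.continuous_sqrt.tendsto 0).comp hsq
        simpa [Function.comp_def, ← sq, Real.sqrt_sq_eq_abs] using h
      exact (tendsto_zero_iff_abs_tendsto_zero _).mpr habs
    have hsum : Tendsto
        (fun j => ∑ k ∈ range (Tb + 1), ∑ i : Fin N, s (ns j) k ω i * uInf k ω i)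
        atTop (nhds 0) := by
      have h := tendsto_finset_sum (range (Tb + 1)) fun k hk =>
        tendsto_finset_sum (univ : Finset (Fin N)) fun i _ =>
          (hcomp k hk i).mul_const (uInf k ω i)
      simpa using h
    simpa only [Ufin, dot] using hsum
  exact tendsto_nhds_unique hUv hU0
end
end

section
/- Assume hypothesis (H1). Fix k ∈ {0, …, T̄} and let λ ∈ ℝ lie in the resolvent sets of both matrices M^𝔞(k) and M^𝔟(k). Then the operator B(k,k) − λ on H_k is invertible, with inverse given by (B(k,k) − λ)⁻¹ ξ(k) = (M^𝔞(k) − λ)⁻¹(ξ(k) − E(ξ(k))) + (M^𝔟(k) − λ)⁻¹ E(ξ(k)) for ξ(k) ∈ H_k. -/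
open MeasureTheory ProbabilityTheory Filter Finset

noncomputable section

namespace Reins

variable {Ω : Type*} [m0 : MeasurableSpace Ω]

/-- Membership in the Hilbert space `H_k` of `F k`-measurable square-integrable
`ℝ^N`-valued random vectors. -/
def InHk (F : Filtration ℕ m0) (P : Measure Ω) {N : ℕ} (k : ℕ)
    (η : Ω → Fin N → ℝ) : Prop :=
  StronglyMeasurable[F k] η ∧ MemLp η 2 P

/-- The operator `A(k,l) : H_l → H_k`, `A(k,l)η = E(u^∞(k)(u^∞(l)·η) | F_k)`. -/
def Aop (F : Filtration ℕ m0) (P : Measure Ω) {N : ℕ} (uInf : ℕ → Ω → Fin N → ℝ)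
    (k l : ℕ) (η : Ω → Fin N → ℝ) : Ω → Fin N → ℝ :=
  P[fun ω => dot (uInf l ω) (η ω) • uInf k ω | F k]

/-- The operator `B(k,l) : H_l → H_k`,
`B(k,l)η = E(u^∞(k)(u^∞(l)·η − E(u^∞(l)·η)) | F_k)`. -/
def Bop (F : Filtration ℕ m0) (P : Measure Ω) {N : ℕ} (uInf : ℕ → Ω → Fin N → ℝ)
    (k l : ℕ) (η : Ω → Fin N → ℝ) : Ω → Fin N → ℝ :=
  P[fun ω => (dot (uInf l ω) (η ω) - ∫ ω', dot (uInf l ω') (η ω') ∂P) • uInf k ω | F k]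

/-- The matrix `N_n^𝔞(k)` with entries `E(E(u_i^∞(k)|F_n) E(u_j^∞(k)|F_n))`. -/
def NaMat (F : Filtration ℕ m0) (P : Measure Ω) {N : ℕ} (n : ℕ)
    (u : Ω → Fin N → ℝ) : Matrix (Fin N) (Fin N) ℝ :=
  Matrix.of fun i j => ∫ ω, (P[fun ω' => u ω' i | F n]) ω * (P[fun ω' => u ω' j | F n]) ω ∂P

/-- The matrix `N_n^𝔟(k)` with entries
`E((E(u_i^∞(k)|F_n) − E(u_i^∞(k)))(E(u_j^∞(k)|F_n) − E(u_j^∞(k))))`. -/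
def NbMat (F : Filtration ℕ m0) (P : Measure Ω) {N : ℕ} (n : ℕ)
    (u : Ω → Fin N → ℝ) : Matrix (Fin N) (Fin N) ℝ :=
  Matrix.of fun i j => ∫ ω, ((P[fun ω' => u ω' i | F n]) ω - mean P u i) *
    ((P[fun ω' => u ω' j | F n]) ω - mean P u j) ∂P

end Reins


open scoped ENNReal

namespace ReinsAux

variable {Ω : Type*} {m0 : MeasurableSpace Ω} {P : Measure Ω} {N : ℕ}

lemma ae_eq_pi {f g : Ω → Fin N → ℝ}
    (h : ∀ i, (fun ω => f ω i) =ᵐ[P] fun ω => g ω i) : f =ᵐ[P] g := by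
  have h' : ∀ᵐ ω ∂P, ∀ i, f ω i = g ω i := ae_all_iff.mpr h
  filter_upwards [h'] with ω hω
  funext i; exact hω i

lemma integrable_of_components {f : Ω → Fin N → ℝ}
    (h : ∀ i, Integrable (fun ω => f ω i) P) : Integrable f P := by
  have hf : f = fun ω => ∑ i, Pi.single (M := fun _ : Fin N => ℝ) i (f ω i) := by
    funext ω; exact (Finset.univ_sum_single (f ω)).symm
  rw [hf]
  refine integrable_finset_sum _ (fun i _ => ?_)
  have h2 : (fun ω => Pi.single (M := fun _ : Fin N => ℝ) i (f ω i))
      = fun ω => (f ω i) • Pi.single (M := fun _ : Fin N => ℝ) i (1:ℝ) := by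
    funext ω; rw [← Pi.single_smul]; simp
  rw [h2]
  exact (h i).smul_const _

lemma memLp_component {f : Ω → Fin N → ℝ} {p : ℝ≥0∞} (hf : MemLp f p P) (i : Fin N) :
    MemLp (fun ω => f ω i) p P :=
  (ContinuousLinearMap.proj (R := ℝ) (φ := fun _ : Fin N => ℝ) i).comp_memLp' hf

lemma integrable_mul_L2 {f g : Ω → ℝ} (hf : MemLp f 2 P) (hg : MemLp g 2 P) :
    Integrable (fun ω => f ω * g ω) P := by
  have h : MemLp (g • f) 1 P := hf.smul hg (hpqr := ⟨by rw [inv_one, ENNReal.inv_two_add_inv_two]⟩)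
  rw [memLp_one_iff_integrable] at h
  have he : (g • f) = fun ω => f ω * g ω := funext fun ω => mul_comm _ _
  rwa [he] at h

lemma memLp2_mul_L4 {f g : Ω → ℝ} (hf : MemLp f 4 P) (hg : MemLp g 4 P) :
    MemLp (fun ω => f ω * g ω) 2 P := by
  have h : MemLp (g • f) 2 P := hf.smul hg (hpqr := ⟨by
    rw [← two_mul, show (4:ℝ≥0∞) = 2 * 2 by norm_num, ENNReal.mul_inv (by simp) (by simp),
      ← mul_assoc, ENNReal.mul_inv_cancel (by simp) (by simp), one_mul]⟩)
  have he : (g • f) = fun ω => f ω * g ω := funext fun ω => mul_comm _ _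
  rwa [he] at h

lemma integrable_component {μ : Measure Ω} {f : Ω → Fin N → ℝ} (hf : Integrable f μ)
    (i : Fin N) : Integrable (fun ω => f ω i) μ :=
  (ContinuousLinearMap.proj (R := ℝ) (φ := fun _ : Fin N => ℝ) i).integrable_comp hf

lemma integral_component {μ : Measure Ω} {f : Ω → Fin N → ℝ} (hf : Integrable f μ)
    (i : Fin N) : ∫ ω, f ω i ∂μ = (∫ ω, f ω ∂μ) i :=
  ((ContinuousLinearMap.proj (R := ℝ) (φ := fun _ : Fin N => ℝ) i).integral_comp_comm hf)

end ReinsAux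

namespace ReinsAux
section CE
variable {Ω : Type*} {N : ℕ}

lemma condexp_component {m m0 : MeasurableSpace Ω} (hm : m ≤ m0) {P : Measure Ω}
    [SigmaFinite (P.trim hm)]
    {f : Ω → Fin N → ℝ} (hf : Integrable f P) (i : Fin N) :
    (fun ω => (P[f|m]) ω i) =ᵐ[P] P[fun ω => f ω i|m] := by
  refine ae_eq_condExp_of_forall_setIntegral_eq hm (integrable_component hf i)
    (fun s _ _ => (integrable_component integrable_condExp i).integrableOn)
    (fun s hs hμs => ?_) ?_
  · rw [integral_component integrable_condExp.integrableOn i,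
      integral_component hf.integrableOn i, setIntegral_condExp hm hf hs]
  · exact StronglyMeasurable.aestronglyMeasurable
      ((continuous_apply i).comp_stronglyMeasurable stronglyMeasurable_condExp)

end CE
end ReinsAux

namespace ReinsAux
open Reins

variable {Ω : Type*} [m0 : MeasurableSpace Ω] {P : Measure Ω} [IsProbabilityMeasure P] {N : ℕ}

/-- Key computation: under independence, `B(k,k) η = M^𝔞 η − (m·Eη) m` a.e. -/
lemma bop_formula_meas (F : Filtration ℕ m0) (k : ℕ)
    {u : Ω → Fin N → ℝ} (hum : Measurable u) (hu : FinMoments P u)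
    (hind : Indep (MeasurableSpace.comap u inferInstance) (F k) P)
    {η : Ω → Fin N → ℝ} (hη1 : StronglyMeasurable[F k] η) (hη2 : MemLp η 2 P) :
    (P[fun ω => (dot (u ω) (η ω) - ∫ ω', dot (u ω') (η ω') ∂P) • u ω|F k])
      =ᵐ[P] fun ω => (momMatrix P u).mulVec (η ω)
        - (dot (mean P u) (mean P η)) • mean P u := by
  have hm := F.le k
  set c := ∫ ω', dot (u ω') (η ω') ∂P with hc
  have hu2 : MemLp u 2 P := by simpa using hu 2
  have hu4 : MemLp u 4 P := by simpa using hu 4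
  have hui2 : ∀ i, MemLp (fun ω => u ω i) 2 P := fun i => memLp_component hu2 i
  have hui4 : ∀ i, MemLp (fun ω => u ω i) 4 P := fun i => memLp_component hu4 i
  have hηi2 : ∀ i, MemLp (fun ω => η ω i) 2 P := fun i => memLp_component hη2 i
  have huu2 : ∀ i j, MemLp (fun ω => u ω j * u ω i) 2 P :=
    fun i j => memLp2_mul_L4 (hui4 j) (hui4 i)
  have hterm : ∀ i j, Integrable (fun ω => η ω j * (u ω j * u ω i)) P :=
    fun i j => integrable_mul_L2 (hηi2 j) (huu2 i j)
  have hsum : ∀ i, Integrable (fun ω => ∑ j, η ω j * (u ω j * u ω i)) P :=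
    fun i => integrable_finset_sum _ fun j _ => hterm i j
  have hui1 : ∀ i, Integrable (fun ω => u ω i) P := fun i => (hui2 i).integrable one_le_two
  have hcu : ∀ i, Integrable (fun ω => c * u ω i) P := fun i => (hui1 i).const_mul c
  have hfi : ∀ i, (fun ω => ((dot (u ω) (η ω) - c) • u ω) i)
      = fun ω => (∑ j, η ω j * (u ω j * u ω i)) - c * u ω i := by
    intro i; funext ω
    simp only [Pi.smul_apply, smul_eq_mul, dot, sub_mul, Finset.sum_mul]
    congr 1
    exact Finset.sum_congr rfl fun j _ => by ring
  have hf_int : Integrable (fun ω => (dot (u ω) (η ω) - c) • u ω) P := by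
    apply integrable_of_components
    intro i; rw [hfi i]; exact (hsum i).sub (hcu i)
  have hucm : Measurable[MeasurableSpace.comap u inferInstance] u :=
    measurable_iff_comap_le.mpr le_rfl
  have hcomap_le : MeasurableSpace.comap u inferInstance ≤ m0 := hum.comap_le
  have hcond_uu : ∀ i j, P[fun ω => u ω j * u ω i|F k]
      =ᵐ[P] fun _ => ∫ ω, u ω j * u ω i ∂P := by
    intro i j
    exact condExp_indep_eq hcomap_le hm
      ((((measurable_pi_apply j).comp hucm).mul
        ((measurable_pi_apply i).comp hucm)).stronglyMeasurable) hind
  have hcond_u : ∀ i, P[fun ω => u ω i|F k] =ᵐ[P] fun _ => mean P u i := fun i =>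
    condExp_indep_eq hcomap_le hm
      ((measurable_pi_apply i).comp hucm).stronglyMeasurable hind
  have hηjm : ∀ j, StronglyMeasurable[F k] (fun ω => η ω j) := fun j =>
    (continuous_apply j).comp_stronglyMeasurable hη1
  -- value of the constant `c`
  have hc_eval : c = dot (mean P u) (mean P η) := by
    have h1 : c = ∑ j, ∫ ω, u ω j * η ω j ∂P := by
      rw [hc]
      rw [show (fun ω' => dot (u ω') (η ω')) = fun ω' => ∑ j, u ω' j * η ω' j from rfl]
      exact integral_finset_sum _ fun j _ => integrable_mul_L2 (hui2 j) (hηi2 j)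
    have h2 : ∀ j, ∫ ω, u ω j * η ω j ∂P = mean P u j * mean P η j := by
      intro j
      have hindf : IndepFun (fun ω => u ω j) (fun ω => η ω j) P := by
        rw [IndepFun_iff_Indep]
        exact indep_of_indep_of_le_left
          (indep_of_indep_of_le_right hind ((hηjm j).measurable.comap_le))
          (((measurable_pi_apply j).comp hucm).comap_le)
      exact hindf.integral_fun_mul_eq_mul_integral (hui2 j).aestronglyMeasurable (hηi2 j).aestronglyMeasurable
    rw [h1]
    exact Finset.sum_congr rfl fun j _ => h2 j
  refine ae_eq_pi (P := P) fun i => ?_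
  have step1 : (fun ω => (P[fun ω => (dot (u ω) (η ω) - c) • u ω|F k]) ω i)
      =ᵐ[P] P[fun ω => ((dot (u ω) (η ω) - c) • u ω) i|F k] :=
    condexp_component hm hf_int i
  have main : P[fun ω => ((dot (u ω) (η ω) - c) • u ω) i|F k]
      =ᵐ[P] fun ω => (∑ j, η ω j * ∫ ω', u ω' j * u ω' i ∂P) - c * mean P u i := by
    have e1 : (fun ω => ((dot (u ω) (η ω) - c) • u ω) i)
        = (fun ω => ∑ j, η ω j * (u ω j * u ω i)) - (fun ω => c * u ω i) := by
      funext ω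
      have := congrFun (hfi i) ω
      simpa [Pi.sub_apply] using this
    rw [e1]
    refine (condExp_sub (hsum i) (hcu i) _).trans ?_
    have h3 : (fun ω => ∑ j, η ω j * (u ω j * u ω i))
        = ∑ j, (fun ω => η ω j * (u ω j * u ω i)) := by
      funext ω; simp
    have h4 : P[fun ω => ∑ j, η ω j * (u ω j * u ω i)|F k]
        =ᵐ[P] ∑ j, P[fun ω => η ω j * (u ω j * u ω i)|F k] := by
      rw [h3]
      exact condExp_finset_sum (fun j _ => hterm i j) _
    have h5 : ∀ j, P[fun ω => η ω j * (u ω j * u ω i)|F k]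
        =ᵐ[P] fun ω => η ω j * ∫ ω', u ω' j * u ω' i ∂P := by
      intro j
      have hmul : P[(fun ω => η ω j) * (fun ω => u ω j * u ω i)|F k]
          =ᵐ[P] (fun ω => η ω j) * P[fun ω => u ω j * u ω i|F k] :=
        condExp_mul_of_stronglyMeasurable_left (hηjm j) (hterm i j)
          ((huu2 i j).integrable one_le_two)
      refine EventuallyEq.trans (by exact hmul) ?_
      filter_upwards [hcond_uu i j] with ω hω
      rw [Pi.mul_apply, hω]
    have h6 : P[fun ω => c * u ω i|F k] =ᵐ[P] fun ω => c * mean P u i := by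
      have hsm : P[c • fun ω => u ω i|F k] =ᵐ[P] c • P[fun ω => u ω i|F k] :=
        condExp_smul c (fun ω => u ω i) _
      refine EventuallyEq.trans (by exact hsm) ?_
      filter_upwards [hcond_u i] with ω hω
      rw [Pi.smul_apply, hω, smul_eq_mul]
    have h5all : ∀ᵐ ω ∂P, ∀ j,
        (P[fun ω => η ω j * (u ω j * u ω i)|F k]) ω
          = η ω j * ∫ ω', u ω' j * u ω' i ∂P := ae_all_iff.mpr h5
    filter_upwards [h4, h5all, h6] with ω h4ω h5ω h6ω
    rw [Pi.sub_apply, h4ω, h6ω, Finset.sum_apply]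
    congr 1
    exact Finset.sum_congr rfl fun j _ => h5ω j
  refine (step1.trans main).trans (Filter.EventuallyEq.of_eq (funext fun ω => ?_))
  rw [hc_eval]
  simp only [Pi.sub_apply, Pi.smul_apply, smul_eq_mul, Matrix.mulVec, dotProduct,
    momMatrix, Matrix.of_apply, dot]
  congr 1
  refine Finset.sum_congr rfl fun j _ => ?_
  rw [mul_comm]
  congr 1
  simp_rw [mul_comm]

/-- Version of `bop_formula_meas` without the measurability assumption on `u`. -/
lemma bop_formula (F : Filtration ℕ m0) (k : ℕ)
    {u : Ω → Fin N → ℝ} (hu : FinMoments P u)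
    (hind : Indep (MeasurableSpace.comap u inferInstance) (F k) P)
    {η : Ω → Fin N → ℝ} (hη1 : StronglyMeasurable[F k] η) (hη2 : MemLp η 2 P) :
    (P[fun ω => (dot (u ω) (η ω) - ∫ ω', dot (u ω') (η ω') ∂P) • u ω|F k])
      =ᵐ[P] fun ω => (momMatrix P u).mulVec (η ω)
        - (dot (mean P u) (mean P η)) • mean P u := by
  have hu1 : MemLp u 1 P := by simpa using hu 1
  set u' := hu1.1.mk u with hu'def
  have hsm : StronglyMeasurable u' := hu1.1.stronglyMeasurable_mk
  have hae : u =ᵐ[P] u' := hu1.1.ae_eq_mk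
  have hum : Measurable u' := hsm.measurable
  have hu' : FinMoments P u' := fun p => (hu p).ae_eq hae
  have hind' : Indep (MeasurableSpace.comap u' inferInstance) (F k) P := by
    rw [Indep_iff] at hind ⊢
    intro t1 t2 ht1 ht2
    obtain ⟨s, hsmeas, rfl⟩ := ht1
    have hpre : u ⁻¹' s =ᵐ[P] u' ⁻¹' s := by
      filter_upwards [hae] with ω hω
      show (u ω ∈ s) = (u' ω ∈ s)
      rw [hω]
    have h1 : P (u' ⁻¹' s ∩ t2) = P (u ⁻¹' s ∩ t2) :=
      measure_congr (hpre.symm.inter (Filter.EventuallyEq.refl _ _))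
    have h2 : P (u' ⁻¹' s) = P (u ⁻¹' s) := measure_congr hpre.symm
    rw [h1, h2]
    exact hind _ t2 ⟨s, hsmeas, rfl⟩ ht2
  have hmom : momMatrix P u' = momMatrix P u := by
    funext i j
    simp only [momMatrix, Matrix.of_apply]
    exact integral_congr_ae (hae.mono fun ω hω => by simp only [← hω])
  have hmean : mean P u' = mean P u := by
    funext i
    exact integral_congr_ae (hae.mono fun ω hω => by simp only [← hω])
  have hcint : ∫ ω', dot (u ω') (η ω') ∂P = ∫ ω', dot (u' ω') (η ω') ∂P :=
    integral_congr_ae (hae.mono fun ω hω => by simp only [dot, hω])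
  have hB : (P[fun ω => (dot (u ω) (η ω) - ∫ ω', dot (u ω') (η ω') ∂P) • u ω|F k])
      =ᵐ[P] (P[fun ω => (dot (u' ω) (η ω) - ∫ ω', dot (u' ω') (η ω') ∂P) • u' ω|F k]) := by
    refine condExp_congr_ae ?_
    filter_upwards [hae] with ω hω
    rw [hω, hcint]
  refine hB.trans ((bop_formula_meas F k hum hu' hind' hη1 hη2).trans ?_)
  rw [hmom, hmean]

omit [IsProbabilityMeasure P] in
lemma mean_congr {f g : Ω → Fin N → ℝ} (h : f =ᵐ[P] g) : mean P f = mean P g := by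
  funext i
  exact integral_congr_ae (h.mono fun ω hω => by simp only [hω])

lemma mean_affine {M : Matrix (Fin N) (Fin N) ℝ} {f : Ω → Fin N → ℝ}
    (hf : MemLp f 2 P) (c : Fin N → ℝ) :
    mean P (fun ω => M.mulVec (f ω) + c) = M.mulVec (mean P f) + c := by
  have hfj : ∀ j, Integrable (fun ω => f ω j) P :=
    fun j => (memLp_component hf j).integrable one_le_two
  funext i
  show ∫ ω, (M.mulVec (f ω) + c) i ∂P = M.mulVec (mean P f) i + c i
  simp only [Matrix.mulVec, dotProduct, Pi.add_apply]
  rw [integral_add (integrable_finset_sum _ fun j _ => (hfj j).const_mul _)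
    (integrable_const _), integral_finset_sum _ fun j _ => (hfj j).const_mul _]
  simp only [integral_const, measure_univ, ENNReal.toReal_one, one_smul, smul_eq_mul, one_mul,
    probReal_univ]
  congr 1
  exact Finset.sum_congr rfl fun j _ => integral_const_mul _ _

omit [IsProbabilityMeasure P] in
lemma isUnit_of_not_spectrum {A : Matrix (Fin N) (Fin N) ℝ} {lam : ℝ}
    (h : lam ∉ spectrum ℝ A) : IsUnit (A - lam • 1) := by
  rw [spectrum.notMem_iff] at h
  have h2 := h.neg
  rwa [Algebra.algebraMap_eq_smul_one, neg_sub] at h2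

omit [IsProbabilityMeasure P] in
lemma inv_mulVec_cancel {A : Matrix (Fin N) (Fin N) ℝ} (h : IsUnit A) (v : Fin N → ℝ) :
    A.mulVec (A⁻¹.mulVec v) = v := by
  rw [Matrix.mulVec_mulVec, Matrix.mul_nonsing_inv _ ((Matrix.isUnit_iff_isUnit_det _).mp h),
    Matrix.one_mulVec]

omit [IsProbabilityMeasure P] in
lemma inv_mulVec_cancel' {A : Matrix (Fin N) (Fin N) ℝ} (h : IsUnit A) (v : Fin N → ℝ) :
    A⁻¹.mulVec (A.mulVec v) = v := by
  rw [Matrix.mulVec_mulVec, Matrix.nonsing_inv_mul _ ((Matrix.isUnit_iff_isUnit_det _).mp h),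
    Matrix.one_mulVec]

lemma cov_entry {u : Ω → Fin N → ℝ} (hu : FinMoments P u) (i j : Fin N) :
    covMatrix P u i j = momMatrix P u i j - mean P u i * mean P u j := by
  have hu2 : MemLp u 2 P := by simpa using hu 2
  have hui2 : ∀ i, MemLp (fun ω => u ω i) 2 P := fun i => memLp_component hu2 i
  have hui1 : ∀ i, Integrable (fun ω => u ω i) P := fun i => (hui2 i).integrable one_le_two
  have huu : Integrable (fun ω => u ω i * u ω j) P := integrable_mul_L2 (hui2 i) (hui2 j)
  simp only [covMatrix, momMatrix, Matrix.of_apply]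
  have hexp : (fun ω => (u ω i - mean P u i) * (u ω j - mean P u j))
      = fun ω => u ω i * u ω j
        - (mean P u j * u ω i + mean P u i * u ω j - mean P u i * mean P u j) := by
    funext ω; ring
  have h1 : Integrable (fun ω => mean P u j * u ω i) P := (hui1 i).const_mul _
  have h2 : Integrable (fun ω => mean P u i * u ω j) P := (hui1 j).const_mul _
  have h3 : Integrable (fun ω => mean P u j * u ω i + mean P u i * u ω j) P := h1.add h2
  have h4 : Integrable (fun ω => mean P u j * u ω i + mean P u i * u ω j
      - mean P u i * mean P u j) P := h3.sub (integrable_const _)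
  rw [hexp, integral_sub huu h4, integral_sub h3 (integrable_const _), integral_add h1 h2,
    integral_const_mul, integral_const_mul]
  simp only [integral_const, measure_univ, ENNReal.toReal_one, one_smul, smul_eq_mul,
    probReal_univ]
  have hmi : ∫ ω, u ω i ∂P = mean P u i := rfl
  have hmj : ∫ ω, u ω j ∂P = mean P u j := rfl
  rw [hmi, hmj]
  ring

lemma momcov {u : Ω → Fin N → ℝ} (hu : FinMoments P u) (v : Fin N → ℝ) :
    (momMatrix P u - covMatrix P u).mulVec v = (dot (mean P u) v) • mean P u := by
  funext i
  simp only [Matrix.mulVec, dotProduct, Matrix.sub_apply, Pi.smul_apply,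
    smul_eq_mul, dot]
  have : ∀ j, momMatrix P u i j - covMatrix P u i j = mean P u i * mean P u j := by
    intro j; rw [cov_entry hu i j]; ring
  calc ∑ j, (momMatrix P u i j - covMatrix P u i j) * v j
      = ∑ j, mean P u i * mean P u j * v j :=
        Finset.sum_congr rfl fun j _ => by rw [this j]
    _ = (∑ j, mean P u j * v j) * mean P u i := by
        rw [Finset.sum_mul]
        exact Finset.sum_congr rfl fun j _ => by ring

omit [IsProbabilityMeasure P] in
lemma stronglyMeasurable_affine {m' : MeasurableSpace Ω} {M : Matrix (Fin N) (Fin N) ℝ}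
    {f : Ω → Fin N → ℝ} (hf : StronglyMeasurable[m'] f) (c : Fin N → ℝ) :
    StronglyMeasurable[m'] (fun ω => M.mulVec (f ω) + c) := by
  have hL : Continuous fun x : Fin N → ℝ => M.mulVec x := by
    have h := (LinearMap.toContinuousLinearMap (Matrix.mulVecLin M)).continuous
    have he : ⇑(LinearMap.toContinuousLinearMap (Matrix.mulVecLin M))
        = fun x : Fin N → ℝ => M.mulVec x := by
      funext x; simp [Matrix.mulVecLin_apply]
    rwa [he] at h
  exact (hL.comp_stronglyMeasurable hf).add stronglyMeasurable_const

lemma memLp_affine {M : Matrix (Fin N) (Fin N) ℝ} {f : Ω → Fin N → ℝ}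
    (hf : MemLp f 2 P) (c : Fin N → ℝ) :
    MemLp (fun ω => M.mulVec (f ω) + c) 2 P := by
  have h := (LinearMap.toContinuousLinearMap (Matrix.mulVecLin M)).comp_memLp' hf
  have he : (⇑(LinearMap.toContinuousLinearMap (Matrix.mulVecLin M)) ∘ f)
      = fun ω => M.mulVec (f ω) := by
    funext ω; simp [Function.comp, Matrix.mulVecLin_apply]
  rw [he] at h
  exact h.add (memLp_const c)

omit [IsProbabilityMeasure P] in
lemma matrix_forward {Ma Mb : Matrix (Fin N) (Fin N) ℝ} {mu : Fin N → ℝ} {lam : ℝ}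
    (hmc : ∀ v, (Ma - Mb).mulVec v = (dot mu v) • mu)
    (hAu : IsUnit (Ma - lam • 1)) (hBu : IsUnit (Mb - lam • 1)) (x e : Fin N → ℝ) :
    Ma.mulVec ((Ma - lam • 1)⁻¹.mulVec (x - e) + (Mb - lam • 1)⁻¹.mulVec e)
      - (dot mu ((Mb - lam • 1)⁻¹.mulVec e)) • mu
      - lam • ((Ma - lam • 1)⁻¹.mulVec (x - e) + (Mb - lam • 1)⁻¹.mulVec e) = x := by
  set A := Ma - lam • (1 : Matrix (Fin N) (Fin N) ℝ) with hA
  set B := Mb - lam • (1 : Matrix (Fin N) (Fin N) ℝ) with hB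
  set w := B⁻¹.mulVec e with hw
  set y := A⁻¹.mulVec (x - e) + w with hy
  have hAx : Ma.mulVec y - lam • y = A.mulVec y := by
    rw [hA, Matrix.sub_mulVec, Matrix.smul_mulVec, Matrix.one_mulVec]
  rw [sub_right_comm, hAx, ← hmc w]
  rw [hy, Matrix.mulVec_add, inv_mulVec_cancel hAu]
  have hAB : A.mulVec w - (Ma - Mb).mulVec w = B.mulVec w := by
    rw [← Matrix.sub_mulVec]
    congr 1
    rw [hA, hB]; abel
  rw [add_sub_assoc, hAB, hw, inv_mulVec_cancel hBu]
  abel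

omit [IsProbabilityMeasure P] in
lemma matrix_mean {Ma Mb : Matrix (Fin N) (Fin N) ℝ} {mu : Fin N → ℝ} {lam : ℝ}
    (hmc : ∀ v, (Ma - Mb).mulVec v = (dot mu v) • mu)
    (hBu : IsUnit (Mb - lam • 1)) {mη e : Fin N → ℝ}
    (h : (Ma - lam • 1).mulVec mη - (dot mu mη) • mu = e) :
    mη = (Mb - lam • 1)⁻¹.mulVec e := by
  have h2 : (Mb - lam • 1).mulVec mη = e := by
    rw [← h, ← hmc mη, ← Matrix.sub_mulVec]
    congr 1
    abel
  rw [← h2, inv_mulVec_cancel' hBu]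

omit [IsProbabilityMeasure P] in
lemma matrix_unique {Ma Mb : Matrix (Fin N) (Fin N) ℝ} {mu : Fin N → ℝ} {lam : ℝ}
    (hmc : ∀ v, (Ma - Mb).mulVec v = (dot mu v) • mu)
    (hAu : IsUnit (Ma - lam • 1)) (hBu : IsUnit (Mb - lam • 1)) {y x e : Fin N → ℝ}
    (h : (Ma - lam • 1).mulVec y - (dot mu ((Mb - lam • 1)⁻¹.mulVec e)) • mu = x) :
    y = (Ma - lam • 1)⁻¹.mulVec (x - e) + (Mb - lam • 1)⁻¹.mulVec e := by
  set A := Ma - lam • (1 : Matrix (Fin N) (Fin N) ℝ) with hA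
  set B := Mb - lam • (1 : Matrix (Fin N) (Fin N) ℝ) with hB
  set w := B⁻¹.mulVec e with hw
  have hAy : A.mulVec y = x + (Ma - Mb).mulVec w := by
    rw [← h, hmc w]; abel
  have hyy : y = A⁻¹.mulVec (x + (Ma - Mb).mulVec w) := by
    rw [← hAy, inv_mulVec_cancel' hAu]
  rw [hyy]
  have h5 : (Ma - Mb).mulVec w = A.mulVec w - e := by
    have hABm : Ma - Mb = A - B := by rw [hA, hB]; abel
    rw [hABm, Matrix.sub_mulVec, hw, inv_mulVec_cancel hBu]
  rw [h5]
  have h6 : x + (A.mulVec w - e) = (x - e) + A.mulVec w := by abel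
  rw [h6, Matrix.mulVec_add, inv_mulVec_cancel' hAu]

end ReinsAux

open ReinsAux

open Reins in
/-- Proposition A.1.  Under (H1), if `λ` lies in the resolvent sets of the
matrices `M^𝔞(k)` and `M^𝔟(k)`, then `B(k,k) − λ` is invertible on `H_k` with inverse
`ξ ↦ (M^𝔞(k) − λ)⁻¹(ξ − E(ξ)) + (M^𝔟(k) − λ)⁻¹E(ξ)`. -/
theorem statement9
    {Ω : Type*} [m0 : MeasurableSpace Ω] (P : Measure Ω) [IsProbabilityMeasure P]
    (F : Filtration ℕ m0) (N Tb : ℕ) (hN : 1 ≤ N) (hTb : 1 ≤ Tb)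
    (hF0 : (F 0 : MeasurableSpace Ω) = ⊥)
    (uInf : ℕ → Ω → Fin N → ℝ) (huInf : ∀ k, k ≤ Tb → FinMoments P (uInf k))
    (h1 : H1 F P Tb uInf)
    (k : ℕ) (hk : k ≤ Tb) (lam : ℝ)
    (hlamA : lam ∉ spectrum ℝ (momMatrix P (uInf k)))
    (hlamB : lam ∉ spectrum ℝ (covMatrix P (uInf k))) :
    ∀ ξ : Ω → Fin N → ℝ, InHk F P k ξ →
      InHk F P k (fun ω =>
          (momMatrix P (uInf k) - lam • 1)⁻¹.mulVec (ξ ω - mean P ξ) +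
          (covMatrix P (uInf k) - lam • 1)⁻¹.mulVec (mean P ξ)) ∧
      (fun ω =>
          Bop F P uInf k k (fun ω' =>
            (momMatrix P (uInf k) - lam • 1)⁻¹.mulVec (ξ ω' - mean P ξ) +
            (covMatrix P (uInf k) - lam • 1)⁻¹.mulVec (mean P ξ)) ω -
          lam • ((momMatrix P (uInf k) - lam • 1)⁻¹.mulVec (ξ ω - mean P ξ) +
            (covMatrix P (uInf k) - lam • 1)⁻¹.mulVec (mean P ξ))) =ᵐ[P] ξ ∧
      ∀ η : Ω → Fin N → ℝ, InHk F P k η →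
        (fun ω => Bop F P uInf k k η ω - lam • η ω) =ᵐ[P] ξ →
        η =ᵐ[P] fun ω =>
          (momMatrix P (uInf k) - lam • 1)⁻¹.mulVec (ξ ω - mean P ξ) +
          (covMatrix P (uInf k) - lam • 1)⁻¹.mulVec (mean P ξ) := by
  intro ξ hξ
  have hu : FinMoments P (uInf k) := huInf k hk
  have hind := h1 k hk
  have hmc : ∀ v, (momMatrix P (uInf k) - covMatrix P (uInf k)).mulVec v
      = (dot (mean P (uInf k)) v) • mean P (uInf k) := momcov hu
  have hAu : IsUnit (momMatrix P (uInf k) - lam • 1) := isUnit_of_not_spectrum hlamA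
  have hBu : IsUnit (covMatrix P (uInf k) - lam • 1) := isUnit_of_not_spectrum hlamB
  set η₀ : Ω → Fin N → ℝ := fun ω =>
      (momMatrix P (uInf k) - lam • 1)⁻¹.mulVec (ξ ω - mean P ξ) +
      (covMatrix P (uInf k) - lam • 1)⁻¹.mulVec (mean P ξ) with hη₀
  have hform : η₀ = fun ω => (momMatrix P (uInf k) - lam • 1)⁻¹.mulVec (ξ ω)
      + ((covMatrix P (uInf k) - lam • 1)⁻¹.mulVec (mean P ξ)
        - (momMatrix P (uInf k) - lam • 1)⁻¹.mulVec (mean P ξ)) := by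
    rw [hη₀]; funext ω; rw [Matrix.mulVec_sub]; abel
  have hη₀m : StronglyMeasurable[F k] η₀ := by
    rw [hform]; exact stronglyMeasurable_affine hξ.1 _
  have hη₀2 : MemLp η₀ 2 P := by
    rw [hform]; exact memLp_affine hξ.2 _
  have hmean₀ : mean P η₀ = (covMatrix P (uInf k) - lam • 1)⁻¹.mulVec (mean P ξ) := by
    rw [hform, mean_affine hξ.2]
    abel
  refine ⟨⟨hη₀m, hη₀2⟩, ?_, ?_⟩
  · -- forward identity
    have hkey : Bop F P uInf k k η₀ =ᵐ[P] fun ω => (momMatrix P (uInf k)).mulVec (η₀ ω)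
        - (dot (mean P (uInf k)) (mean P η₀)) • mean P (uInf k) :=
      bop_formula F k hu hind hη₀m hη₀2
    filter_upwards [hkey] with ω hω
    rw [show Bop F P uInf k k η₀ ω - lam • ((momMatrix P (uInf k) - lam • 1)⁻¹.mulVec
        (ξ ω - mean P ξ) + (covMatrix P (uInf k) - lam • 1)⁻¹.mulVec (mean P ξ))
        = Bop F P uInf k k η₀ ω - lam • η₀ ω from rfl]
    rw [hω, hmean₀, hη₀]
    exact matrix_forward hmc hAu hBu (ξ ω) (mean P ξ)
  · -- uniqueness
    intro η hη heq
    have hkeyη : Bop F P uInf k k η =ᵐ[P] fun ω => (momMatrix P (uInf k)).mulVec (η ω)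
        - (dot (mean P (uInf k)) (mean P η)) • mean P (uInf k) :=
      bop_formula F k hu hind hη.1 hη.2
    have hstar : (fun ω => (momMatrix P (uInf k) - lam • 1).mulVec (η ω)
        - (dot (mean P (uInf k)) (mean P η)) • mean P (uInf k)) =ᵐ[P] ξ := by
      filter_upwards [hkeyη, heq] with ω h1 h2
      rw [Matrix.sub_mulVec, Matrix.smul_mulVec, Matrix.one_mulVec, ← h2, h1]
      abel
    have hmean_eq : (momMatrix P (uInf k) - lam • 1).mulVec (mean P η)
        - (dot (mean P (uInf k)) (mean P η)) • mean P (uInf k) = mean P ξ := by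
      have hmc2 := mean_congr hstar
      rw [← hmc2]
      have hrw : (fun ω => (momMatrix P (uInf k) - lam • 1).mulVec (η ω)
          - (dot (mean P (uInf k)) (mean P η)) • mean P (uInf k))
          = fun ω => (momMatrix P (uInf k) - lam • 1).mulVec (η ω)
            + (-((dot (mean P (uInf k)) (mean P η)) • mean P (uInf k))) :=
        funext fun ω => sub_eq_add_neg _ _
      rw [hrw, mean_affine hη.2, ← sub_eq_add_neg]
    have hmeanη : mean P η = (covMatrix P (uInf k) - lam • 1)⁻¹.mulVec (mean P ξ) :=
      matrix_mean hmc hBu hmean_eq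
    filter_upwards [hstar] with ω hω
    rw [hmeanη] at hω
    rw [hη₀]
    exact matrix_unique hmc hAu hBu hω
end
end

section
/- Assume hypotheses (H1), (H2) and (H3), fix λ ∈ ℝ, and let 0 ≤ k ≤ n ≤ T̄. Suppose λ lies in the resolvent set of both matrices M^𝔠(k) − Σ_{n+1≤r≤T̄} d_r f_r² N_r^𝔠(k) for 𝔠 = 𝔞 and 𝔠 = 𝔟 (in particular all quantities d_r, f_r for n+1 ≤ r ≤ T̄ are well defined). Then the operator B^n(k,k) on H_k is invertible, with inverse (B^n(k,k))⁻¹ ξ(k) = (M^𝔞(k) − Σ_{n+1≤r≤T̄} d_r f_r² N_r^𝔞(k) − λ)⁻¹ (ξ(k) − E(ξ(k))) + (M^𝔟(k) − Σ_{n+1≤r≤T̄} d_r f_r² N_r^𝔟(k) − λ)⁻¹ E(ξ(k)). -/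
open MeasureTheory ProbabilityTheory Filter Finset

noncomputable section

namespace Reins

variable {Ω : Type*} [m0 : MeasurableSpace Ω]

/-- Joint downward recursion computing `(f_n, g_n, D_n(·))`; the argument `j` corresponds
to the level `n = T̄ − j`, starting from `f_T̄ = 1`, `g_T̄ = 0`, `D_T̄(k) = M^𝔞(k) − λ` and
using `d_n = E(u^∞(n))·(D_n(n)⁻¹ E(u^∞(n)))`, `f_{n−1} = f_n(1 − d_n f_n)`,
`g_{n−1} = g_n + d_n f_n²`, `D_{n−1}(k) = D_n(k) − d_n f_n² N_n^𝔞(k)`. -/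
def recFGD (F : Filtration ℕ m0) (P : Measure Ω) {N : ℕ} (Tb : ℕ)
    (uInf : ℕ → Ω → Fin N → ℝ) (lam : ℝ) :
    ℕ → ℝ × ℝ × (ℕ → Matrix (Fin N) (Fin N) ℝ)
  | 0 => (1, 0, fun k => momMatrix P (uInf k) - lam • 1)
  | j + 1 =>
    let p := recFGD F P Tb uInf lam j
    let n := Tb - j
    let d := dot (mean P (uInf n)) ((p.2.2 n)⁻¹.mulVec (mean P (uInf n)))
    (p.1 * (1 - d * p.1), p.2.1 + d * p.1 ^ 2,
      fun k => p.2.2 k - (d * p.1 ^ 2) • NaMat F P n (uInf k))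

/-- `f_n`. -/
def fN (F : Filtration ℕ m0) (P : Measure Ω) {N : ℕ} (Tb : ℕ)
    (uInf : ℕ → Ω → Fin N → ℝ) (lam : ℝ) (n : ℕ) : ℝ :=
  (recFGD F P Tb uInf lam (Tb - n)).1

/-- `g_n`. -/
def gN (F : Filtration ℕ m0) (P : Measure Ω) {N : ℕ} (Tb : ℕ)
    (uInf : ℕ → Ω → Fin N → ℝ) (lam : ℝ) (n : ℕ) : ℝ :=
  (recFGD F P Tb uInf lam (Tb - n)).2.1

/-- `D_n(k)`. -/
def DN (F : Filtration ℕ m0) (P : Measure Ω) {N : ℕ} (Tb : ℕ)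
    (uInf : ℕ → Ω → Fin N → ℝ) (lam : ℝ) (n k : ℕ) : Matrix (Fin N) (Fin N) ℝ :=
  (recFGD F P Tb uInf lam (Tb - n)).2.2 k

/-- `d_n = E(u^∞(n))·(D_n(n)⁻¹ E(u^∞(n)))`. -/
def dN (F : Filtration ℕ m0) (P : Measure Ω) {N : ℕ} (Tb : ℕ)
    (uInf : ℕ → Ω → Fin N → ℝ) (lam : ℝ) (n : ℕ) : ℝ :=
  dot (mean P (uInf n)) ((DN F P Tb uInf lam n n)⁻¹.mulVec (mean P (uInf n)))

/-- The matrix `M^𝔞(k) − Σ_{n+1 ≤ r ≤ T̄} d_r f_r² N_r^𝔞(k)`. -/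
def DaSum (F : Filtration ℕ m0) (P : Measure Ω) {N : ℕ} (Tb : ℕ)
    (uInf : ℕ → Ω → Fin N → ℝ) (lam : ℝ) (n k : ℕ) : Matrix (Fin N) (Fin N) ℝ :=
  momMatrix P (uInf k) -
    ∑ r ∈ Finset.Icc (n + 1) Tb,
      (dN F P Tb uInf lam r * fN F P Tb uInf lam r ^ 2) • NaMat F P r (uInf k)

/-- The matrix `M^𝔟(k) − Σ_{n+1 ≤ r ≤ T̄} d_r f_r² N_r^𝔟(k)`. -/
def DbSum (F : Filtration ℕ m0) (P : Measure Ω) {N : ℕ} (Tb : ℕ)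
    (uInf : ℕ → Ω → Fin N → ℝ) (lam : ℝ) (n k : ℕ) : Matrix (Fin N) (Fin N) ℝ :=
  covMatrix P (uInf k) -
    ∑ r ∈ Finset.Icc (n + 1) Tb,
      (dN F P Tb uInf lam r * fN F P Tb uInf lam r ^ 2) • NbMat F P r (uInf k)

/-- The diagonal operator `B^n(k,k)` on `H_k`:
`B^n(k,k)η = D_n(k)η − (1 − g_n) E(u^∞(k))(E(u^∞(k))·E(η))`. -/
def BnDiag (F : Filtration ℕ m0) (P : Measure Ω) {N : ℕ} (Tb : ℕ)
    (uInf : ℕ → Ω → Fin N → ℝ) (lam : ℝ) (n k : ℕ)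
    (η : Ω → Fin N → ℝ) : Ω → Fin N → ℝ :=
  fun ω => (DN F P Tb uInf lam n k).mulVec (η ω) -
    ((1 - gN F P Tb uInf lam n) * dot (mean P (uInf k)) (mean P η)) • mean P (uInf k)

/-- The diagonal operator `A^n(k,k)` on `H_k`: `A^n(k,k)η = D_n(k)η`. -/
def AnDiag (F : Filtration ℕ m0) (P : Measure Ω) {N : ℕ} (Tb : ℕ)
    (uInf : ℕ → Ω → Fin N → ℝ) (lam : ℝ) (n k : ℕ)
    (η : Ω → Fin N → ℝ) : Ω → Fin N → ℝ :=
  fun ω => (DN F P Tb uInf lam n k).mulVec (η ω)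

end Reins


namespace Reins

section Helpers

/-- Auxiliary: the conditional expectation of an `L²` real function is in `L²`. -/
lemma memℒp_two_condexp {Ω : Type*} {m m0 : MeasurableSpace Ω} (hm : m ≤ m0) (P : Measure Ω)
    [IsProbabilityMeasure P] {f : Ω → ℝ} (hf : MemLp f 2 P) : MemLp (P[f|m]) 2 P := by
  haveI : SigmaFinite (P.trim hm) := by infer_instance
  set g : lpMeas ℝ ℝ m 2 P := condExpL2 ℝ ℝ hm (hf.toLp f) with hgdef
  have hmeas := aestronglyMeasurable_condExpL2 (𝕜 := ℝ) hm (hf.toLp f)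
  have hae : ((g : Lp ℝ 2 P) : Ω → ℝ) =ᵐ[P] P[f|m] := by
    refine ae_eq_condExp_of_forall_setIntegral_eq hm (hf.integrable one_le_two)
      (fun s hs hμs => integrableOn_condExpL2_of_measure_ne_top hm hμs.ne _)
      (fun s hs hμs => ?_) hmeas
    rw [integral_condExpL2_eq hm (hf.toLp f) hs hμs.ne]
    exact setIntegral_congr_ae (hm s hs) (hf.coeFn_toLp.mono fun x hx _ => hx)
  exact (Lp.memLp (g : Lp ℝ 2 P)).ae_eq hae

/-- Auxiliary: product of two `L²` functions is integrable. -/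
lemma integrable_mul_of_memℒp_two {Ω : Type*} [m0 : MeasurableSpace Ω] (P : Measure Ω) {f g : Ω → ℝ}
    (hf : MemLp f 2 P) (hg : MemLp g 2 P) : Integrable (fun ω => f ω * g ω) P := by
  have h := L2.integrable_inner (𝕜 := ℝ) (hf.toLp f) (hg.toLp g)
  refine h.congr ?_
  filter_upwards [hf.coeFn_toLp, hg.coeFn_toLp] with x hx1 hx2
  simp [hx1, hx2, RCLike.inner_apply, mul_comm]

/-- Auxiliary: components of an `Lᵖ` vector-valued function are in `Lᵖ`. -/
lemma memℒp_proj {Ω : Type*} [m0 : MeasurableSpace Ω] (P : Measure Ω) {N : ℕ} {f : Ω → Fin N → ℝ} {p : ENNReal}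
    (hf : MemLp f p P) (i : Fin N) : MemLp (fun ω => f ω i) p P :=
  (ContinuousLinearMap.proj (R := ℝ) (φ := fun _ : Fin N => ℝ) i).comp_memLp' hf

/-- Auxiliary: centered second moment equals raw second moment minus product of means. -/
lemma integral_centered_mul {Ω : Type*} [m0 : MeasurableSpace Ω] (P : Measure Ω) [IsProbabilityMeasure P]
    {f g : Ω → ℝ} (hf : MemLp f 2 P) (hg : MemLp g 2 P) :
    ∫ ω, (f ω - ∫ ω', f ω' ∂P) * (g ω - ∫ ω', g ω' ∂P) ∂P
      = ∫ ω, f ω * g ω ∂P - (∫ ω', f ω' ∂P) * (∫ ω', g ω' ∂P) := by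
  have h1 : Integrable f P := hf.integrable one_le_two
  have h2 : Integrable g P := hg.integrable one_le_two
  have hfg : Integrable (fun ω => f ω * g ω) P := integrable_mul_of_memℒp_two P hf hg
  set a := ∫ ω', f ω' ∂P
  set b := ∫ ω', g ω' ∂P
  have hexp : ∀ ω, (f ω - a) * (g ω - b) = f ω * g ω - b * f ω - (a * g ω - a * b) := by
    intro ω; ring
  simp_rw [hexp]
  rw [integral_sub (by exact hfg.sub (h1.const_mul b) :
        Integrable (fun ω => f ω * g ω - b * f ω) P)
      (by exact (h2.const_mul a).sub (integrable_const _) :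
        Integrable (fun ω => a * g ω - a * b) P),
    integral_sub hfg (h1.const_mul b), integral_sub (h2.const_mul a) (integrable_const _),
    MeasureTheory.integral_const_mul, MeasureTheory.integral_const_mul, integral_const]
  simp [measure_univ]
  ring

/-- The covariance matrix is the raw second-moment matrix minus the rank-one mean matrix. -/
lemma covMatrix_eq {Ω : Type*} [m0 : MeasurableSpace Ω] (P : Measure Ω) [IsProbabilityMeasure P] {N : ℕ}
    {u : Ω → Fin N → ℝ} (hu : MemLp u 2 P) :
    covMatrix P u = momMatrix P u - Matrix.vecMulVec (mean P u) (mean P u) := by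
  ext i j
  simp only [covMatrix, momMatrix, mean, Matrix.sub_apply, Matrix.of_apply,
    Matrix.vecMulVec_apply]
  exact integral_centered_mul P (memℒp_proj P hu i) (memℒp_proj P hu j)

/-- `N^𝔟 = N^𝔞` minus the rank-one mean matrix. -/
lemma nbMat_eq {Ω : Type*} [m0 : MeasurableSpace Ω] (F : Filtration ℕ m0) (P : Measure Ω) [IsProbabilityMeasure P] {N : ℕ}
    (r : ℕ) {u : Ω → Fin N → ℝ} (hu : MemLp u 2 P) :
    NbMat F P r u = NaMat F P r u - Matrix.vecMulVec (mean P u) (mean P u) := by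
  have hle : (F r : MeasurableSpace Ω) ≤ m0 := F.le r
  haveI : SigmaFinite (P.trim hle) := by infer_instance
  ext i j
  simp only [NbMat, NaMat, Matrix.sub_apply, Matrix.of_apply, Matrix.vecMulVec_apply]
  have hEi : mean P u i = ∫ ω, (P[fun ω' => u ω' i|F r]) ω ∂P :=
    (integral_condExp hle).symm
  have hEj : mean P u j = ∫ ω, (P[fun ω' => u ω' j|F r]) ω ∂P :=
    (integral_condExp hle).symm
  rw [hEi, hEj,
    integral_centered_mul P (memℒp_two_condexp hle P (memℒp_proj P hu i))
      (memℒp_two_condexp hle P (memℒp_proj P hu j))]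

end Helpers

section Rec

variable {Ω : Type*} [m0 : MeasurableSpace Ω]

/-- Closed form of the downward recursion. -/
lemma recFGD_spec (F : Filtration ℕ m0) (P : Measure Ω) {N : ℕ} (Tb : ℕ)
    (uInf : ℕ → Ω → Fin N → ℝ) (lam : ℝ) :
    ∀ j, j ≤ Tb →
      (recFGD F P Tb uInf lam j).2.1
        = ∑ r ∈ Finset.Icc (Tb - j + 1) Tb,
            dN F P Tb uInf lam r * fN F P Tb uInf lam r ^ 2 ∧
      ∀ k, (recFGD F P Tb uInf lam j).2.2 k
        = momMatrix P (uInf k)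
          - (∑ r ∈ Finset.Icc (Tb - j + 1) Tb,
              (dN F P Tb uInf lam r * fN F P Tb uInf lam r ^ 2) • NaMat F P r (uInf k))
          - lam • (1 : Matrix (Fin N) (Fin N) ℝ) := by
  intro j
  induction j with
  | zero =>
    intro _
    rw [Finset.Icc_eq_empty (by omega)]
    simp [recFGD]
  | succ j IH =>
    intro hj1
    have hj : j ≤ Tb := by omega
    obtain ⟨IH1, IH2⟩ := IH hj
    set n := Tb - j with hn
    have hTbn : Tb - n = j := by omega
    have hTbj1 : Tb - (j + 1) + 1 = n := by omega
    have hicc : Finset.Icc n Tb = insert n (Finset.Icc (n + 1) Tb) := by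
      ext x; simp only [Finset.mem_Icc, Finset.mem_insert]; omega
    have hnm : n ∉ Finset.Icc (n + 1) Tb := by simp
    have hd : dot (mean P (uInf n))
        (((recFGD F P Tb uInf lam j).2.2 n)⁻¹.mulVec (mean P (uInf n)))
        = dN F P Tb uInf lam n := by
      unfold dN DN
      rw [hTbn]
    have hf : (recFGD F P Tb uInf lam j).1 = fN F P Tb uInf lam n := by
      unfold fN; rw [hTbn]
    constructor
    · show (recFGD F P Tb uInf lam j).2.1
        + dot (mean P (uInf n))
            (((recFGD F P Tb uInf lam j).2.2 n)⁻¹.mulVec (mean P (uInf n)))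
          * (recFGD F P Tb uInf lam j).1 ^ 2 = _
      rw [hd, hf, IH1, hTbj1, hicc, Finset.sum_insert hnm]
      ring
    · intro k
      show (recFGD F P Tb uInf lam j).2.2 k
        - (dot (mean P (uInf n))
            (((recFGD F P Tb uInf lam j).2.2 n)⁻¹.mulVec (mean P (uInf n)))
          * (recFGD F P Tb uInf lam j).1 ^ 2) • NaMat F P n (uInf k) = _
      rw [hd, hf, IH2 k, hTbj1, hicc, Finset.sum_insert hnm]
      abel

/-- `D_n(k) = M^𝔞(k) − Σ_{n+1≤r≤T̄} d_r f_r² N_r^𝔞(k) − λ`. -/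
lemma dN_eq_daSum (F : Filtration ℕ m0) (P : Measure Ω) {N : ℕ} (Tb : ℕ)
    (uInf : ℕ → Ω → Fin N → ℝ) (lam : ℝ) {n : ℕ} (hn : n ≤ Tb) (k : ℕ) :
    DN F P Tb uInf lam n k = DaSum F P Tb uInf lam n k - lam • 1 := by
  have h := (recFGD_spec F P Tb uInf lam (Tb - n) (by omega)).2 k
  unfold DN DaSum
  rw [h, show Tb - (Tb - n) + 1 = n + 1 by omega]

/-- `g_n = Σ_{n+1≤r≤T̄} d_r f_r²`. -/
lemma gN_eq_sum (F : Filtration ℕ m0) (P : Measure Ω) {N : ℕ} (Tb : ℕ)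
    (uInf : ℕ → Ω → Fin N → ℝ) (lam : ℝ) {n : ℕ} (hn : n ≤ Tb) :
    gN F P Tb uInf lam n
      = ∑ r ∈ Finset.Icc (n + 1) Tb, dN F P Tb uInf lam r * fN F P Tb uInf lam r ^ 2 := by
  have h := (recFGD_spec F P Tb uInf lam (Tb - n) (by omega)).1
  unfold gN
  rw [h, show Tb - (Tb - n) + 1 = n + 1 by omega]

end Rec

end Reins


namespace Reins

section MeanLemmas

variable {Ω : Type*} [m0 : MeasurableSpace Ω]

lemma mean_congr_ae {P : Measure Ω} {N : ℕ} {f g : Ω → Fin N → ℝ} (h : f =ᵐ[P] g) :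
    mean P f = mean P g :=
  funext fun i => integral_congr_ae (h.mono fun ω hω => show f ω i = g ω i by rw [hω])

lemma mean_shape (P : Measure Ω) [IsProbabilityMeasure P] {N : ℕ}
    (M : Matrix (Fin N) (Fin N) ℝ) (f : Ω → Fin N → ℝ) (c0 c : Fin N → ℝ)
    (hf : ∀ i, Integrable (fun ω => f ω i) P) :
    mean P (fun ω => M.mulVec (f ω - c0) + c) = M.mulVec (mean P f - c0) + c := by
  funext i
  have hterm : ∀ j : Fin N, Integrable (fun ω => M i j * (f ω j - c0 j)) P := fun j => by
    exact ((hf j).sub (integrable_const _)).const_mul _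
  show ∫ ω, (M.mulVec (f ω - c0) + c) i ∂P = _
  simp only [Pi.add_apply, Matrix.mulVec, dotProduct, Pi.sub_apply]
  rw [integral_add (integrable_finset_sum _ fun j _ => hterm j) (integrable_const _),
    integral_finset_sum _ (fun j _ => hterm j), integral_const]
  simp only [measure_univ, probReal_univ, ENNReal.toReal_one, one_smul, smul_eq_mul, one_mul]
  congr 1
  refine Finset.sum_congr rfl fun j _ => ?_
  rw [MeasureTheory.integral_const_mul, integral_sub (hf j) (integrable_const _), integral_const]
  simp [mean]

lemma mean_shape2 (P : Measure Ω) [IsProbabilityMeasure P] {N : ℕ}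
    (M : Matrix (Fin N) (Fin N) ℝ) (f : Ω → Fin N → ℝ) (c : Fin N → ℝ)
    (hf : ∀ i, Integrable (fun ω => f ω i) P) :
    mean P (fun ω => M.mulVec (f ω) - c) = M.mulVec (mean P f) - c := by
  funext i
  have hterm : ∀ j : Fin N, Integrable (fun ω => M i j * f ω j) P := fun j => by
    exact (hf j).const_mul _
  show ∫ ω, (M.mulVec (f ω) - c) i ∂P = _
  simp only [Pi.sub_apply, Matrix.mulVec, dotProduct]
  rw [integral_sub (integrable_finset_sum _ fun j _ => hterm j) (integrable_const _),
    integral_finset_sum _ (fun j _ => hterm j), integral_const]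
  simp only [measure_univ, probReal_univ, ENNReal.toReal_one, one_smul, smul_eq_mul, one_mul]
  congr 1
  refine Finset.sum_congr rfl fun j _ => ?_
  rw [MeasureTheory.integral_const_mul]
  simp [mean]

lemma inHk_shape (F : Filtration ℕ m0) (P : Measure Ω) [IsFiniteMeasure P] {N : ℕ} (k : ℕ)
    (M : Matrix (Fin N) (Fin N) ℝ) (c0 c : Fin N → ℝ) {ξ : Ω → Fin N → ℝ}
    (hξ : InHk F P k ξ) : InHk F P k (fun ω => M.mulVec (ξ ω - c0) + c) := by
  obtain ⟨hm, hp⟩ := hξ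
  set L := LinearMap.toContinuousLinearMap (Matrix.mulVecLin M) with hL
  have heq : (fun ω => M.mulVec (ξ ω - c0) + c) = fun ω => L (ξ ω - c0) + c := by
    funext ω; simp [hL]
  rw [heq]
  constructor
  · exact (L.continuous.comp_stronglyMeasurable (hm.sub stronglyMeasurable_const)).add
      stronglyMeasurable_const
  · exact ((L.comp_memLp' (hp.sub (memLp_const c0))).add (memLp_const c))

lemma vecMulVec_mulVec {N : ℕ} (u v m : Fin N → ℝ) :
    (Matrix.vecMulVec u v).mulVec m = dot v m • u := by
  funext i
  simp only [Matrix.mulVec, Matrix.vecMulVec_apply, dotProduct, Pi.smul_apply,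
    smul_eq_mul, dot, Finset.sum_mul, Finset.mul_sum]
  exact Finset.sum_congr rfl fun j _ => by ring

end MeanLemmas

end Reins

open Reins in
/-- Proposition A.2.  Under (H1), (H2) and (H3), if `λ` lies in the
resolvent sets of the matrices `M^𝔠(k) − Σ_{n+1≤r≤T̄} d_r f_r² N_r^𝔠(k)` for `𝔠 = 𝔞, 𝔟`
(all `d_r`, `f_r`, `n+1 ≤ r ≤ T̄`, being well defined, i.e. the matrices `D_r(r)` are
invertible), then `B^n(k,k)` is invertible on `H_k` with inverse
`ξ ↦ (M^𝔞(k) − Σ d_r f_r² N_r^𝔞(k) − λ)⁻¹(ξ − E(ξ)) +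
(M^𝔟(k) − Σ d_r f_r² N_r^𝔟(k) − λ)⁻¹E(ξ)`. -/
theorem statement10
    {Ω : Type*} [m0 : MeasurableSpace Ω] (P : Measure Ω) [IsProbabilityMeasure P]
    (F : Filtration ℕ m0) (N Tb : ℕ) (hN : 1 ≤ N) (hTb : 1 ≤ Tb)
    (hF0 : (F 0 : MeasurableSpace Ω) = ⊥)
    (uInf : ℕ → Ω → Fin N → ℝ) (huInf : ∀ k, k ≤ Tb → FinMoments P (uInf k))
    (h1 : H1 F P Tb uInf) (h2 : H2 P Tb uInf) (h3 : H3 P Tb uInf)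
    (lam : ℝ) (n k : ℕ) (hkn : k ≤ n) (hn : n ≤ Tb)
    (hd : ∀ r, n < r → r ≤ Tb → IsUnit (DN F P Tb uInf lam r r))
    (hlamA : lam ∉ spectrum ℝ (DaSum F P Tb uInf lam n k))
    (hlamB : lam ∉ spectrum ℝ (DbSum F P Tb uInf lam n k)) :
    ∀ ξ : Ω → Fin N → ℝ, InHk F P k ξ →
      InHk F P k (fun ω =>
          (DaSum F P Tb uInf lam n k - lam • 1)⁻¹.mulVec (ξ ω - mean P ξ) +
          (DbSum F P Tb uInf lam n k - lam • 1)⁻¹.mulVec (mean P ξ)) ∧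
      BnDiag F P Tb uInf lam n k (fun ω =>
          (DaSum F P Tb uInf lam n k - lam • 1)⁻¹.mulVec (ξ ω - mean P ξ) +
          (DbSum F P Tb uInf lam n k - lam • 1)⁻¹.mulVec (mean P ξ)) =ᵐ[P] ξ ∧
      ∀ η : Ω → Fin N → ℝ, InHk F P k η →
        BnDiag F P Tb uInf lam n k η =ᵐ[P] ξ →
        η =ᵐ[P] fun ω =>
          (DaSum F P Tb uInf lam n k - lam • 1)⁻¹.mulVec (ξ ω - mean P ξ) +
          (DbSum F P Tb uInf lam n k - lam • 1)⁻¹.mulVec (mean P ξ) := by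
  intro ξ hξ
  have hk : k ≤ Tb := le_trans hkn hn
  have hu2 : MemLp (uInf k) 2 P := huInf k hk 2
  have hint : ∀ (f : Ω → Fin N → ℝ), MemLp f 2 P → ∀ i, Integrable (fun ω => f ω i) P :=
    fun f hf i => (memℒp_proj P hf i).integrable one_le_two
  set Da := DaSum F P Tb uInf lam n k - lam • (1 : Matrix (Fin N) (Fin N) ℝ) with hDa
  set Db := DbSum F P Tb uInf lam n k - lam • (1 : Matrix (Fin N) (Fin N) ℝ) with hDb
  set μk := mean P (uInf k) with hμk
  set mξ := mean P ξ with hmξ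
  set cand := (fun ω => Da⁻¹.mulVec (ξ ω - mξ) + Db⁻¹.mulVec mξ) with hcand
  set W := Matrix.vecMulVec μk μk with hW
  set g := gN F P Tb uInf lam n with hgdef
  -- invertibility
  have hAu : IsUnit Da := by
    have h := spectrum.notMem_iff.mp hlamA
    rw [Algebra.algebraMap_eq_smul_one] at h
    rw [hDa, ← neg_sub]
    exact h.neg
  have hBu : IsUnit Db := by
    have h := spectrum.notMem_iff.mp hlamB
    rw [Algebra.algebraMap_eq_smul_one] at h
    rw [hDb, ← neg_sub]
    exact h.neg
  have hAinv : ∀ v, Da.mulVec (Da⁻¹.mulVec v) = v := fun v => by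
    rw [Matrix.mulVec_mulVec, Matrix.mul_nonsing_inv _ ((Matrix.isUnit_iff_isUnit_det _).mp hAu),
      Matrix.one_mulVec]
  have hAinv' : ∀ v, Da⁻¹.mulVec (Da.mulVec v) = v := fun v => by
    rw [Matrix.mulVec_mulVec, Matrix.nonsing_inv_mul _ ((Matrix.isUnit_iff_isUnit_det _).mp hAu),
      Matrix.one_mulVec]
  have hBinv : ∀ v, Db.mulVec (Db⁻¹.mulVec v) = v := fun v => by
    rw [Matrix.mulVec_mulVec, Matrix.mul_nonsing_inv _ ((Matrix.isUnit_iff_isUnit_det _).mp hBu),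
      Matrix.one_mulVec]
  have hBinv' : ∀ v, Db⁻¹.mulVec (Db.mulVec v) = v := fun v => by
    rw [Matrix.mulVec_mulVec, Matrix.nonsing_inv_mul _ ((Matrix.isUnit_iff_isUnit_det _).mp hBu),
      Matrix.one_mulVec]
  -- structure equations
  have hDb_eq : Db = Da - (1 - g) • W := by
    have h1 : ∑ r ∈ Finset.Icc (n + 1) Tb,
        (dN F P Tb uInf lam r * fN F P Tb uInf lam r ^ 2) • NbMat F P r (uInf k)
        = (∑ r ∈ Finset.Icc (n + 1) Tb,
            (dN F P Tb uInf lam r * fN F P Tb uInf lam r ^ 2) • NaMat F P r (uInf k))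
          - g • W := by
      rw [hgdef, gN_eq_sum F P Tb uInf lam hn, Finset.sum_smul, ← Finset.sum_sub_distrib]
      exact Finset.sum_congr rfl fun r _ => by
        rw [nbMat_eq F P r hu2, smul_sub]
    rw [hDb, hDa]
    unfold DbSum DaSum
    rw [covMatrix_eq P hu2, h1, sub_smul, one_smul]
    abel
  have hDa_eq : Da = Db + (1 - g) • W := by rw [hDb_eq]; abel
  have hDN : DN F P Tb uInf lam n k = Da := dN_eq_daSum F P Tb uInf lam hn k
  -- mean of the candidate
  have hmean_cand : mean P cand = Db⁻¹.mulVec mξ := by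
    rw [hcand, mean_shape P Da⁻¹ ξ mξ (Db⁻¹.mulVec mξ) (hint ξ hξ.2), ← hmξ, sub_self,
      Matrix.mulVec_zero, zero_add]
  -- key pointwise identity
  have hDaCand : ∀ ω, Da.mulVec (cand ω)
      = ξ ω + ((1 - g) * dot μk (Db⁻¹.mulVec mξ)) • μk := by
    intro ω
    rw [hcand]
    rw [Matrix.mulVec_add, hAinv]
    rw [hDa_eq]
    rw [Matrix.add_mulVec, hBinv, Matrix.smul_mulVec, hW, vecMulVec_mulVec, smul_smul]
    abel
  refine ⟨inHk_shape F P k Da⁻¹ mξ _ hξ, ?_, ?_⟩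
  · -- forward identity
    have : BnDiag F P Tb uInf lam n k cand = ξ := by
      funext ω
      show (DN F P Tb uInf lam n k).mulVec (cand ω)
        - ((1 - gN F P Tb uInf lam n) * dot (mean P (uInf k)) (mean P cand))
          • mean P (uInf k) = ξ ω
      rw [hDN, hmean_cand, hDaCand ω, ← hμk, ← hgdef]
      abel
    rw [this]
  · -- uniqueness
    intro η hη hBη
    have hmη_int := hint η hη.2
    have hmeanB : mean P (BnDiag F P Tb uInf lam n k η) = mξ := by
      rw [mean_congr_ae hBη, hmξ]
    have hBn_shape : BnDiag F P Tb uInf lam n k η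
        = fun ω => Da.mulVec (η ω)
            - ((1 - g) * dot μk (mean P η)) • μk := by
      funext ω
      show (DN F P Tb uInf lam n k).mulVec (η ω)
        - ((1 - gN F P Tb uInf lam n) * dot (mean P (uInf k)) (mean P η))
          • mean P (uInf k) = _
      rw [hDN, ← hμk, ← hgdef]
    have hmη : mean P η = Db⁻¹.mulVec mξ := by
      have h2 : Da.mulVec (mean P η) - ((1 - g) * dot μk (mean P η)) • μk = mξ := by
        rw [← mean_shape2 P Da η (((1 - g) * dot μk (mean P η)) • μk) hmη_int, ← hBn_shape,
          hmeanB]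
      have h3 : Db.mulVec (mean P η) = mξ := by
        rw [hDb_eq, Matrix.sub_mulVec, Matrix.smul_mulVec, hW, vecMulVec_mulVec,
          smul_smul]
        exact h2
      rw [← h3, hBinv']
    filter_upwards [hBη] with ω hω
    rw [hBn_shape] at hω
    have hω' : Da.mulVec (η ω) = ξ ω + ((1 - g) * dot μk (Db⁻¹.mulVec mξ)) • μk := by
      rw [← hmη]
      exact eq_add_of_sub_eq hω
    calc η ω = Da⁻¹.mulVec (Da.mulVec (η ω)) := (hAinv' _).symm
      _ = Da⁻¹.mulVec (Da.mulVec (cand ω)) := by rw [hω', hDaCand ω]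
      _ = cand ω := hAinv' _
end
end

section
/- Assume hypotheses (H1) and (H2), and fix k ∈ {0, …, T̄}. Define α(k) = max_{a ∈ ℝ^N, |a| = 1} |E(a·u^∞(k))| / (E(|a·u^∞(k)|²))^{1/2}. Then 0 ≤ α(k) < 1, and for every F_k-measurable square-integrable η(k) : Ω → ℝ^N, writing X_k = η(k)·u^∞(k), one has almost surely |E(X_k | F_k)| ≤ α(k) (E(X_k² | F_k))^{1/2}. -/
open MeasureTheory ProbabilityTheory Filter Finset

noncomputable section

namespace Statement17Aux
open Reins
open scoped ENNReal NNReal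

lemma integrable_mul_L2 {Ω : Type*} {m0 : MeasurableSpace Ω} {P : Measure Ω}
    {f g : Ω → ℝ} (hf : MemLp f 2 P) (hg : MemLp g 2 P) :
    Integrable (fun ω => f ω * g ω) P := by
  refine Integrable.mono' ((hf.integrable_sq.add hg.integrable_sq).div_const 2)
    (hf.1.mul hg.1) (Filter.Eventually.of_forall fun ω => ?_)
  show ‖f ω * g ω‖ ≤ (f ω ^ 2 + g ω ^ 2) / 2
  rw [Real.norm_eq_abs, abs_mul]
  nlinarith [sq_abs (f ω), sq_abs (g ω), abs_nonneg (f ω), abs_nonneg (g ω),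
    sq_nonneg (|f ω| - |g ω|)]

lemma memLp_eval {Ω : Type*} {m0 : MeasurableSpace Ω} {P : Measure Ω}
    {N : ℕ} {u : Ω → Fin N → ℝ} {p : ℝ≥0∞} (hu : MemLp u p P) (i : Fin N) :
    MemLp (fun ω => u ω i) p P :=
  hu.of_le ((continuous_apply i).comp_aestronglyMeasurable hu.1)
    (Filter.Eventually.of_forall fun ω => norm_le_pi_norm (u ω) i)

lemma indepFun_of {Ω : Type*} {m mg m0 : MeasurableSpace Ω} {P : Measure Ω}
    (hind : Indep mg m P) {f g : Ω → ℝ}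
    (hf : Measurable[m] f) (hg : Measurable[mg] g) : IndepFun f g P :=
  (indep_of_indep_of_le_left (indep_of_indep_of_le_right hind hf.comap_le) hg.comap_le).symm

lemma condexp_mul_indep {Ω : Type*} {m mg m0 : MeasurableSpace Ω} (hm : m ≤ m0)
    {P : Measure Ω} [IsProbabilityMeasure P]
    (hind : Indep mg m P) {f g : Ω → ℝ}
    (hf : StronglyMeasurable[m] f) (hg : Measurable[mg] g)
    (hfi : Integrable f P) (hgi : Integrable g P) :
    P[(fun ω => f ω * g ω) | m] =ᵐ[P] fun ω => f ω * ∫ ω', g ω' ∂P := by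
  have hmul : Integrable (fun ω => f ω * g ω) P :=
    (indepFun_of hind hf.measurable hg).integrable_mul hfi hgi
  refine (ae_eq_condExp_of_forall_setIntegral_eq hm hmul
    (fun s _ _ => ((hfi.mul_const _).integrableOn))
    (fun s hs _ => ?_)
    ((hf.mul stronglyMeasurable_const).aestronglyMeasurable)).symm
  have hsm : MeasurableSet[m0] s := hm s hs
  have hind2 : IndepFun (s.indicator f) g P :=
    indepFun_of hind (hf.indicator hs).measurable hg
  have hi1 : Integrable (s.indicator f) P := hfi.indicator hsm
  have key : ∫ x, (s.indicator f * g) x ∂P = (∫ x, s.indicator f x ∂P) * ∫ x, g x ∂P :=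
    hind2.integral_mul_eq_mul_integral hi1.1 hgi.1
  have h1 : ∫ x in s, f x * g x ∂P = ∫ x, (s.indicator f * g) x ∂P := by
    rw [← integral_indicator hsm]
    congr 1; ext x
    by_cases hx : x ∈ s <;> simp [Set.indicator_apply, hx]
  have h2 : ∫ x in s, f x * (∫ ω', g ω' ∂P) ∂P = (∫ x in s, f x ∂P) * ∫ ω', g ω' ∂P := by
    rw [integral_mul_const]
  rw [h2, h1, key, ← integral_indicator hsm]

lemma dot_smul_smul {N : ℕ} (c : ℝ) (x y : Fin N → ℝ) :
    dot (c • x) (c • y) = c ^ 2 * dot x y := by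
  simp only [dot, Pi.smul_apply, smul_eq_mul, Finset.mul_sum]
  exact Finset.sum_congr rfl fun i _ => by ring

lemma dot_smul_left {N : ℕ} (c : ℝ) (x y : Fin N → ℝ) :
    dot (c • x) y = c * dot x y := by
  simp only [dot, Pi.smul_apply, smul_eq_mul, Finset.mul_sum]
  exact Finset.sum_congr rfl fun i _ => by ring

lemma det_bound {N : ℕ} (hN : 1 ≤ N) (μv : Fin N → ℝ) (Q : (Fin N → ℝ) → ℝ)
    (hQc : Continuous Q)
    (hQscale : ∀ (c : ℝ) (x : Fin N → ℝ), Q (c • x) = c ^ 2 * Q x)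
    (hpos : ∀ a : Fin N → ℝ, dot a a = 1 → (dot a μv) ^ 2 < Q a)
    (α : ℝ)
    (hα : α = sSup {x : ℝ | ∃ a : Fin N → ℝ, dot a a = 1 ∧
      x = |dot a μv| / Real.sqrt (Q a)}) :
    0 ≤ α ∧ α < 1 ∧ ∀ x : Fin N → ℝ, |dot x μv| ≤ α * Real.sqrt (Q x) := by
  set S : Set ℝ := {x : ℝ | ∃ a : Fin N → ℝ, dot a a = 1 ∧
      x = |dot a μv| / Real.sqrt (Q a)} with hS
  set K : Set (Fin N → ℝ) := {a | dot a a = 1} with hK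
  set f : (Fin N → ℝ) → ℝ := fun a => |dot a μv| / Real.sqrt (Q a) with hf
  have hKne : K.Nonempty := by
    refine ⟨Pi.single ⟨0, hN⟩ 1, ?_⟩
    show dot _ _ = 1
    simp [dot, Pi.single_apply, ite_mul, Finset.sum_ite_eq']
  have hQpos : ∀ a ∈ K, 0 < Q a := fun a ha => (sq_nonneg _).trans_lt (hpos a ha)
  have hdotc : ∀ y : Fin N → ℝ, Continuous fun a : Fin N → ℝ => dot a y := by
    intro y
    unfold dot
    exact continuous_finset_sum _ fun i _ => (continuous_apply i).mul continuous_const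
  have hKc : IsCompact K := by
    have hcl : IsClosed K := by
      have : Continuous fun a : Fin N → ℝ => dot a a := by
        unfold dot
        exact continuous_finset_sum _ fun i _ => (continuous_apply i).mul (continuous_apply i)
      exact isClosed_eq this continuous_const
    refine (isCompact_closedBall (0 : Fin N → ℝ) 1).of_isClosed_subset hcl ?_
    intro a ha
    have ha' : (∑ j, a j * a j) = 1 := ha
    simp only [Metric.mem_closedBall, dist_zero_right]
    rw [pi_norm_le_iff_of_nonneg zero_le_one]
    intro i
    have h1 : a i * a i ≤ ∑ j, a j * a j :=
      Finset.single_le_sum (fun j _ => mul_self_nonneg (a j)) (Finset.mem_univ i)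
    rw [ha'] at h1
    rw [Real.norm_eq_abs]
    nlinarith [abs_nonneg (a i), abs_mul_abs_self (a i)]
  have hfc : ContinuousOn f K :=
    ContinuousOn.div ((hdotc μv).abs.continuousOn)
      ((Real.continuous_sqrt.comp hQc).continuousOn)
      (fun a ha => (Real.sqrt_pos.mpr (hQpos a ha)).ne')
  obtain ⟨a₀, ha₀K, hmax⟩ := hKc.exists_isMaxOn hKne hfc
  have hmax' : ∀ b ∈ K, f b ≤ f a₀ := fun b hb => hmax hb
  have hmemS : ∀ a ∈ K, f a ∈ S := fun a ha => ⟨a, ha, rfl⟩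
  have hbdd : BddAbove S := by
    refine ⟨f a₀, ?_⟩
    rintro x ⟨a, ha, rfl⟩
    exact hmax' a ha
  have hSne : S.Nonempty := ⟨f a₀, hmemS a₀ ha₀K⟩
  have hub : ∀ x ∈ S, x ≤ f a₀ := by rintro x ⟨a, ha, rfl⟩; exact hmax' a ha
  have hαeq : α = f a₀ := le_antisymm (hα ▸ csSup_le hSne hub)
    (hα ▸ le_csSup hbdd (hmemS a₀ ha₀K))
  have hα0 : 0 ≤ α := by
    rw [hαeq]
    exact div_nonneg (abs_nonneg _) (Real.sqrt_nonneg _)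
  have hα1 : α < 1 := by
    rw [hαeq]
    have hlt : |dot a₀ μv| < Real.sqrt (Q a₀) := by
      have h := Real.sqrt_lt_sqrt (sq_nonneg _) (hpos a₀ ha₀K)
      rwa [Real.sqrt_sq_eq_abs] at h
    exact (div_lt_one (Real.sqrt_pos.mpr (hQpos a₀ ha₀K))).mpr hlt
  refine ⟨hα0, hα1, fun x => ?_⟩
  by_cases hx : x = 0
  · have h0 : dot x μv = 0 := by simp [hx, dot]
    rw [h0, abs_zero]
    exact mul_nonneg hα0 (Real.sqrt_nonneg _)
  · have hxx : 0 < dot x x := by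
      obtain ⟨i, hi⟩ := Function.ne_iff.mp hx
      refine Finset.sum_pos' (fun j _ => mul_self_nonneg (x j))
        ⟨i, Finset.mem_univ i, mul_self_pos.mpr ?_⟩
      simpa using hi
    set s := Real.sqrt (dot x x) with hs
    have hs0 : 0 < s := Real.sqrt_pos.mpr hxx
    have hs2 : s ^ 2 = dot x x := Real.sq_sqrt hxx.le
    have haK : dot (s⁻¹ • x) (s⁻¹ • x) = 1 := by
      rw [dot_smul_smul, ← hs2]
      field_simp
    have hQa : Q (s⁻¹ • x) = (s⁻¹) ^ 2 * Q x := hQscale s⁻¹ x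
    have hQapos : 0 < Q (s⁻¹ • x) := hQpos _ haK
    have hQx : 0 < Q x := by
      rw [hQa] at hQapos
      nlinarith [sq_nonneg s⁻¹]
    have hfle : f (s⁻¹ • x) ≤ α := hα ▸ le_csSup hbdd (hmemS _ haK)
    have hfeq : f (s⁻¹ • x) = |dot x μv| / Real.sqrt (Q x) := by
      rw [hf]
      simp only []
      rw [dot_smul_left, hQa, abs_mul, Real.sqrt_mul (sq_nonneg _),
        Real.sqrt_sq (inv_nonneg.mpr hs0.le), abs_of_pos (inv_pos.mpr hs0)]
      rw [mul_div_mul_left _ _ (ne_of_gt (inv_pos.mpr hs0))]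
    rw [hfeq] at hfle
    exact (div_le_iff₀ (Real.sqrt_pos.mpr hQx)).mp hfle

end Statement17Aux

open Reins in
/-- inequalities (EqP.4.2.5)–(EqP.4.2.7).  Under (H1) and (H2), with
`α(k) = max_{|a|=1} |E(a·u^∞(k))| / (E(|a·u^∞(k)|²))^{1/2}`, one has `0 ≤ α(k) < 1` and,
for every `F_k`-measurable square-integrable `η(k)`, writing `X_k = η(k)·u^∞(k)`,
`|E(X_k|F_k)| ≤ α(k) (E(X_k²|F_k))^{1/2}` almost surely. -/
theorem statement17
    {Ω : Type*} [m0 : MeasurableSpace Ω] (P : Measure Ω) [IsProbabilityMeasure P]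
    (F : Filtration ℕ m0) (N Tb : ℕ) (hN : 1 ≤ N) (hTb : 1 ≤ Tb)
    (hF0 : (F 0 : MeasurableSpace Ω) = ⊥)
    (uInf : ℕ → Ω → Fin N → ℝ) (huInf : ∀ k, k ≤ Tb → FinMoments P (uInf k))
    (h1 : H1 F P Tb uInf) (h2 : H2 P Tb uInf)
    (k : ℕ) (hk : k ≤ Tb) (α : ℝ)
    (hα : α = sSup {x : ℝ | ∃ a : Fin N → ℝ, dot a a = 1 ∧
      x = |∫ ω, dot a (uInf k ω) ∂P| / Real.sqrt (∫ ω, (dot a (uInf k ω)) ^ 2 ∂P)}) :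
    0 ≤ α ∧ α < 1 ∧
      ∀ η : Ω → Fin N → ℝ, InHk F P k η →
        ∀ᵐ ω ∂P,
          |(P[fun ω' => dot (η ω') (uInf k ω') | F k]) ω| ≤
            α * Real.sqrt ((P[fun ω' => (dot (η ω') (uInf k ω')) ^ 2 | F k]) ω) := by
    classical
  have hm : (F k : MeasurableSpace Ω) ≤ m0 := F.le k
  have hu2 : MemLp (uInf k) 2 P := by
    have := huInf k hk 2
    simpa using this
  have hui2 : ∀ i, MemLp (fun ω => uInf k ω i) 2 P := fun i => Statement17Aux.memLp_eval hu2 i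
  have hui1 : ∀ i, Integrable (fun ω => uInf k ω i) P := fun i => (hui2 i).integrable one_le_two
  have huij : ∀ i j, Integrable (fun ω => uInf k ω i * uInf k ω j) P := fun i j =>
    Statement17Aux.integrable_mul_L2 (hui2 i) (hui2 j)
  set μv : Fin N → ℝ := fun i => ∫ ω, uInf k ω i ∂P with hμv
  set Mm : Fin N → Fin N → ℝ := fun i j => ∫ ω, uInf k ω i * uInf k ω j ∂P with hMm
  -- integral identities
  have hInt1 : ∀ a : Fin N → ℝ, ∫ ω, dot a (uInf k ω) ∂P = dot a μv := by
    intro a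
    simp only [dot]
    rw [integral_finset_sum _ (fun i _ => (hui1 i).const_mul (a i))]
    refine Finset.sum_congr rfl fun i _ => ?_
    rw [integral_const_mul, hμv]
  have hInt2 : ∀ a : Fin N → ℝ, ∫ ω, (dot a (uInf k ω)) ^ 2 ∂P
      = ∑ i, ∑ j, a i * a j * Mm i j := by
    intro a
    have hexp : ∀ ω, (dot a (uInf k ω)) ^ 2
        = ∑ i, ∑ j, a i * a j * (uInf k ω i * uInf k ω j) := by
      intro ω
      simp only [dot]
      rw [sq, Finset.sum_mul_sum]
      exact Finset.sum_congr rfl fun i _ => Finset.sum_congr rfl fun j _ => by ring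
    simp_rw [hexp]
    rw [integral_finset_sum _ (fun i _ =>
      integrable_finset_sum _ (fun j _ => (huij i j).const_mul (a i * a j)))]
    refine Finset.sum_congr rfl fun i _ => ?_
    rw [integral_finset_sum _ (fun j _ => (huij i j).const_mul (a i * a j))]
    refine Finset.sum_congr rfl fun j _ => ?_
    rw [integral_const_mul, hMm]
  -- covariance identity
  have hMc : ∀ i j, Mm i j = covMatrix P (uInf k) i j + μv i * μv j := by
    intro i j
    have hA : Integrable (fun ω => μv i * uInf k ω j) P := (hui1 j).const_mul _
    have hB : Integrable (fun ω => μv j * uInf k ω i) P := (hui1 i).const_mul _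
    have hadd : Integrable (fun ω => μv i * uInf k ω j + μv j * uInf k ω i) P := hA.add hB
    have hsub : Integrable
        (fun ω => μv i * uInf k ω j + μv j * uInf k ω i - μv i * μv j) P :=
      hadd.sub (integrable_const _)
    have hmean : ∀ i', mean P (uInf k) i' = μv i' := fun i' => by rw [hμv]; rfl
    have hfun : (fun ω => (uInf k ω i - mean P (uInf k) i) * (uInf k ω j - mean P (uInf k) j))
        = fun ω => uInf k ω i * uInf k ω j
            - (μv i * uInf k ω j + μv j * uInf k ω i - μv i * μv j) := by
      ext ω; rw [hmean, hmean]; ring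
    have hval : covMatrix P (uInf k) i j
        = ∫ ω, (uInf k ω i * uInf k ω j
            - (μv i * uInf k ω j + μv j * uInf k ω i - μv i * μv j)) ∂P := by
      show (∫ ω, (uInf k ω i - mean P (uInf k) i) * (uInf k ω j - mean P (uInf k) j) ∂P) = _
      rw [hfun]
    rw [hval, integral_sub (huij i j) hsub, integral_sub hadd (integrable_const _),
      integral_add hA hB, integral_const_mul, integral_const_mul, integral_const]
    simp only [measure_univ, probReal_univ, ENNReal.toReal_one, one_smul, smul_eq_mul]
    have e1 : ∫ ω, uInf k ω j ∂P = μv j := by rw [hμv]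
    have e2 : ∫ ω, uInf k ω i ∂P = μv i := by rw [hμv]
    have e3 : ∫ ω, uInf k ω i * uInf k ω j ∂P = Mm i j := by rw [hMm]
    rw [e1, e2, e3]
    ring
  -- positivity on the sphere
  have hpos : ∀ a : Fin N → ℝ, dot a a = 1 → (dot a μv) ^ 2 < ∑ i, ∑ j, a i * a j * Mm i j := by
    intro a ha
    have ha0 : a ≠ 0 := by
      intro h
      rw [h] at ha
      simp [dot] at ha
    have hc := (h2 k hk).dotProduct_mulVec_pos ha0
    have hstar : star a = a := funext fun i => rfl
    rw [hstar] at hc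
    have hdotc : dotProduct a ((covMatrix P (uInf k)).mulVec a)
        = ∑ i, ∑ j, a i * a j * covMatrix P (uInf k) i j := by
      simp only [dotProduct, Matrix.mulVec, Finset.mul_sum]
      exact Finset.sum_congr rfl fun i _ => Finset.sum_congr rfl fun j _ => by ring
    have hsplit : ∀ i j, a i * a j * Mm i j
        = a i * a j * covMatrix P (uInf k) i j + (a i * μv i) * (a j * μv j) := by
      intro i j; rw [hMc i j]; ring
    have hsq : ∑ i, ∑ j, (a i * μv i) * (a j * μv j) = (dot a μv) ^ 2 := by
      simp only [dot, sq]
      rw [Finset.sum_mul_sum]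
    calc (dot a μv) ^ 2
        < (dot a μv) ^ 2 + dotProduct a ((covMatrix P (uInf k)).mulVec a) := by
          linarith
      _ = ∑ i, ∑ j, a i * a j * Mm i j := by
          simp_rw [hsplit, Finset.sum_add_distrib, hsq, hdotc]
          ring
  -- continuity and scaling of Q
  have hQc : Continuous fun x : Fin N → ℝ => ∑ i, ∑ j, x i * x j * Mm i j :=
    continuous_finset_sum _ fun i _ => continuous_finset_sum _ fun j _ =>
      ((continuous_apply i).mul (continuous_apply j)).mul continuous_const
  have hQscale : ∀ (c : ℝ) (x : Fin N → ℝ),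
      (∑ i, ∑ j, (c • x) i * (c • x) j * Mm i j) = c ^ 2 * ∑ i, ∑ j, x i * x j * Mm i j := by
    intro c x
    rw [Finset.mul_sum]
    refine Finset.sum_congr rfl fun i _ => ?_
    rw [Finset.mul_sum]
    exact Finset.sum_congr rfl fun j _ => by simp [Pi.smul_apply]; ring
  have hα' : α = sSup {x : ℝ | ∃ a : Fin N → ℝ, dot a a = 1 ∧
      x = |dot a μv| / Real.sqrt (∑ i, ∑ j, a i * a j * Mm i j)} := by
    rw [hα]
    congr 1
    ext x
    constructor
    · rintro ⟨a, ha, rfl⟩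
      exact ⟨a, ha, by rw [hInt1, hInt2]⟩
    · rintro ⟨a, ha, rfl⟩
      exact ⟨a, ha, by rw [hInt1, hInt2]⟩
  obtain ⟨hα0, hα1, hbound⟩ := Statement17Aux.det_bound hN μv
    (fun x => ∑ i, ∑ j, x i * x j * Mm i j) hQc hQscale hpos α hα'
  refine ⟨hα0, hα1, fun η hη => ?_⟩
  obtain ⟨hηm, hη2⟩ := hη
  have hηi2 : ∀ i, MemLp (fun ω => η ω i) 2 P := fun i => Statement17Aux.memLp_eval hη2 i
  have hηsm : ∀ i, StronglyMeasurable[F k] (fun ω => η ω i) := fun i =>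
    (continuous_apply i).comp_stronglyMeasurable hηm
  have hηii : ∀ i, Integrable (fun ω => η ω i) P := fun i => (hηi2 i).integrable one_le_two
  have hind := h1 k hk
  have humeas : Measurable[MeasurableSpace.comap (uInf k) inferInstance] (uInf k) :=
    Measurable.of_comap_le le_rfl
  have hgm : ∀ i, Measurable[MeasurableSpace.comap (uInf k) inferInstance]
      (fun ω => uInf k ω i) := fun i => (measurable_pi_apply i).comp humeas
  -- conditional expectation of X
  have hXsum : (fun ω => dot (η ω) (uInf k ω))
      = ∑ i : Fin N, fun ω => η ω i * uInf k ω i := by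
    ext ω; simp [dot, Finset.sum_apply]
  have hterm_int : ∀ i, Integrable (fun ω => η ω i * uInf k ω i) P := fun i =>
    Statement17Aux.integrable_mul_L2 (hηi2 i) (hui2 i)
  have hX : P[(fun ω => dot (η ω) (uInf k ω)) | F k] =ᵐ[P] fun ω => dot (η ω) μv := by
    rw [hXsum]
    refine (condExp_finset_sum (fun i _ => hterm_int i) (F k)).trans ?_
    have hterm : ∀ i : Fin N, P[(fun ω => η ω i * uInf k ω i) | F k]
        =ᵐ[P] fun ω => η ω i * μv i := fun i =>
      Statement17Aux.condexp_mul_indep hm hind (hηsm i) (hgm i) (hηii i) (hui1 i)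
    filter_upwards [ae_all_iff.mpr hterm] with ω hω
    simp only [Finset.sum_apply]
    rw [Finset.sum_congr rfl fun i _ => hω i]
    simp [dot]
  -- conditional expectation of X²
  have hT_int : ∀ i j, Integrable (fun ω => η ω i * η ω j * (uInf k ω i * uInf k ω j)) P := by
    intro i j
    exact (Statement17Aux.indepFun_of hind ((hηsm i).mul (hηsm j)).measurable
      ((hgm i).mul (hgm j))).integrable_mul
      (Statement17Aux.integrable_mul_L2 (hηi2 i) (hηi2 j)) (huij i j)
  have hX2sum : (fun ω => (dot (η ω) (uInf k ω)) ^ 2)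
      = ∑ i : Fin N, ∑ j : Fin N, fun ω => η ω i * η ω j * (uInf k ω i * uInf k ω j) := by
    ext ω
    simp only [Finset.sum_apply, dot]
    rw [sq, Finset.sum_mul_sum]
    exact Finset.sum_congr rfl fun i _ => Finset.sum_congr rfl fun j _ => by ring
  have hX2 : P[(fun ω => (dot (η ω) (uInf k ω)) ^ 2) | F k]
      =ᵐ[P] fun ω => ∑ i, ∑ j, η ω i * η ω j * Mm i j := by
    rw [hX2sum]
    have hsum_int : ∀ i : Fin N,
        Integrable (∑ j : Fin N, fun ω => η ω i * η ω j * (uInf k ω i * uInf k ω j)) P := by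
      intro i
      have := integrable_finset_sum (μ := P) Finset.univ
        (fun j (_ : j ∈ Finset.univ) => hT_int i j)
      simpa [← Finset.sum_fn] using this
    refine (condExp_finset_sum (fun i _ => hsum_int i) (F k)).trans ?_
    have hinner : ∀ i : Fin N,
        P[(∑ j : Fin N, fun ω => η ω i * η ω j * (uInf k ω i * uInf k ω j)) | F k]
        =ᵐ[P] ∑ j : Fin N, P[(fun ω => η ω i * η ω j * (uInf k ω i * uInf k ω j)) | F k] :=
      fun i => condExp_finset_sum (fun j _ => hT_int i j) (F k)
    have hterm : ∀ i j : Fin N,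
        P[(fun ω => η ω i * η ω j * (uInf k ω i * uInf k ω j)) | F k]
        =ᵐ[P] fun ω => η ω i * η ω j * Mm i j := fun i j =>
      Statement17Aux.condexp_mul_indep hm hind ((hηsm i).mul (hηsm j)) ((hgm i).mul (hgm j))
        (Statement17Aux.integrable_mul_L2 (hηi2 i) (hηi2 j)) (huij i j)
    filter_upwards [ae_all_iff.mpr hinner,
      ae_all_iff.mpr (fun i => ae_all_iff.mpr (hterm i))] with ω h1ω h2ω
    simp only [Finset.sum_apply]
    rw [Finset.sum_congr rfl fun i _ => h1ω i]
    simp only [Finset.sum_apply]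
    exact Finset.sum_congr rfl fun i _ => Finset.sum_congr rfl fun j _ => h2ω i j
  filter_upwards [hX, hX2] with ω hXω hX2ω
  rw [hXω, hX2ω]
  exact hbound (η ω)
end
end
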